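/- arXiv:1210.4745 — 3 statements merged into one kernel-verified Lean document; each statement's English description precedes it below -/
import Mathlib

section
/- For every a ∈ V_K, the divergence of the gradient of f_2 satisfies (∇·(∇f_2))(a) = −(K+2)(α_ev(a) − ᾱ_ev(a)). -/
open Finset MeasureTheory Filter

namespace CRW

/-- The vertex set `V_K = {-1,1}^K ⊆ ℤ^K`. -/
def V (K : ℕ) : Finset (Fin K → ℤ) :=
  Fintype.piFinset fun _ => ({-1, 1} : Finset ℤ)

/-- The nonzero entries of `b - a`, read in order of increasing index, alternate in sign,
the first nonzero entry being negative (the `c`-th nonzero entry, `0`-indexed, equals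
`2 * (-1)^(c+1)`; in particular all entries lie in `{-2,0,2}`). -/
def AltNeg (K : ℕ) (a b : Fin K → ℤ) : Prop :=
  ∀ i : Fin K, b i - a i ≠ 0 →
    b i - a i =
      2 * (-1 : ℤ) ^ (((Finset.univ.filter fun j : Fin K => j < i ∧ b j - a j ≠ 0)).card + 1)

/-- Same with the first nonzero entry positive. -/
def AltPos (K : ℕ) (a b : Fin K → ℤ) : Prop :=
  ∀ i : Fin K, b i - a i ≠ 0 →
    b i - a i =
      2 * (-1 : ℤ) ^ ((Finset.univ.filter fun j : Fin K => j < i ∧ b j - a j ≠ 0)).card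

instance (K : ℕ) (a b : Fin K → ℤ) : Decidable (AltNeg K a b) := by
  unfold AltNeg; infer_instance

instance (K : ℕ) (a b : Fin K → ℤ) : Decidable (AltPos K a b) := by
  unfold AltPos; infer_instance

/-- The set `E_K^+` of positive edges: couples `(a,b)` of vertices with `a ≠ b` whose
difference has nonzero entries of alternating signs, the first one negative; together
with one (positive) loop `(a,a)` at every vertex. -/
def Eplus (K : ℕ) : Finset ((Fin K → ℤ) × (Fin K → ℤ)) :=
  ((V K) ×ˢ (V K)).filter fun p => p.1 = p.2 ∨ AltNeg K p.1 p.2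

/-- The set `E_K^-` of negative edges, with one (negative) loop at every vertex. -/
def Eminus (K : ℕ) : Finset ((Fin K → ℤ) × (Fin K → ℤ)) :=
  ((V K) ×ˢ (V K)).filter fun p => p.1 = p.2 ∨ AltPos K p.1 p.2

/-- Type of signed edges: the Boolean records whether the edge is positive. -/
abbrev Edge (K : ℕ) := Bool × ((Fin K → ℤ) × (Fin K → ℤ))

/-- `E_K = E_K^+ ⊔ E_K^-` as a disjoint union (positive edges tagged `true`). -/
def EK (K : ℕ) : Finset (Edge K) :=
  (Eplus K).image (fun p => (true, p)) ∪ (Eminus K).image (fun p => (false, p))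

/-- The vector field `A`, equal to `+1` on `E_K^+` and `-1` on `E_K^-`. -/
noncomputable def A (K : ℕ) : Edge K → ℝ := fun e => if e.1 then 1 else -1

/-- `α_k(a)`: the number of `b` with `(a,b) ∈ E_K^+` differing from `a` in exactly `k`
coordinates. -/
def alphaK (K k : ℕ) (a : Fin K → ℤ) : ℕ :=
  ((V K).filter fun b =>
    (a, b) ∈ Eplus K ∧ (Finset.univ.filter fun i : Fin K => b i ≠ a i).card = k).card

/-- `ᾱ_k(a)`: the number of `b` with `(a,b) ∈ E_K^-` differing from `a` in exactly `k`
coordinates. -/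
def abarK (K k : ℕ) (a : Fin K → ℤ) : ℕ :=
  ((V K).filter fun b =>
    (a, b) ∈ Eminus K ∧ (Finset.univ.filter fun i : Fin K => b i ≠ a i).card = k).card

/-- `α_ev(a) = Σ_{k even} α_k(a)`. -/
def alphaEv (K : ℕ) (a : Fin K → ℤ) : ℕ :=
  ∑ k ∈ (Finset.range (K + 1)).filter (fun k => Even k), alphaK K k a

/-- `α_od(a) = Σ_{k odd} α_k(a)`. -/
def alphaOd (K : ℕ) (a : Fin K → ℤ) : ℕ :=
  ∑ k ∈ (Finset.range (K + 1)).filter (fun k => Odd k), alphaK K k a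

/-- `ᾱ_ev(a) = Σ_{k even} ᾱ_k(a)`. -/
def abarEv (K : ℕ) (a : Fin K → ℤ) : ℕ :=
  ∑ k ∈ (Finset.range (K + 1)).filter (fun k => Even k), abarK K k a

/-- `ᾱ_od(a) = Σ_{k odd} ᾱ_k(a)`. -/
def abarOd (K : ℕ) (a : Fin K → ℤ) : ℕ :=
  ∑ k ∈ (Finset.range (K + 1)).filter (fun k => Odd k), abarK K k a

/-- `ᾱ(a) = Σ_{k=0}^K ᾱ_k(a)`. -/
def abarTot (K : ℕ) (a : Fin K → ℤ) : ℕ := ∑ k ∈ Finset.range (K + 1), abarK K k a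

/-- `f_1(a) = Σ_i a_i`. -/
def f1 (K : ℕ) (a : Fin K → ℤ) : ℤ := ∑ i : Fin K, a i

/-- `f_2(a) = α_2(a) - ᾱ_2(a)`. -/
def f2 (K : ℕ) (a : Fin K → ℤ) : ℤ := (alphaK K 2 a : ℤ) - (abarK K 2 a : ℤ)

/-- `φ(a) = Σ_{(a,b) ∈ E_K^+} (f_2(b) - f_2(a))` (loops included; they contribute `0`). -/
def phi (K : ℕ) (a : Fin K → ℤ) : ℤ :=
  ∑ p ∈ (Eplus K).filter (fun p => p.1 = a), (f2 K p.2 - f2 K p.1)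

/-- `φ̄(a) = Σ_{(a,b) ∈ E_K^-} (f_2(b) - f_2(a))`. -/
def phibar (K : ℕ) (a : Fin K → ℤ) : ℤ :=
  ∑ p ∈ (Eminus K).filter (fun p => p.1 = a), (f2 K p.2 - f2 K p.1)

/-- The gradient vector field of a function `f` on the vertices:
`∇f(a,b) = f(b) - f(a)` (it vanishes on loops). -/
noncomputable def gradE (K : ℕ) (f : (Fin K → ℤ) → ℝ) : Edge K → ℝ := fun e => f e.2.2 - f e.2.1

/-- Divergence of a vector field at a vertex: the sum of its values over all edges of
`E_K` leaving that vertex, loops included. -/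
noncomputable def divE (K : ℕ) (S : Edge K → ℝ) (a : Fin K → ℤ) : ℝ :=
  ∑ e ∈ (EK K).filter (fun e => e.2.1 = a), S e

/-- Scalar product `⟨S,S'⟩ = (1/D_K) Σ_{e ∈ E_K} S(e) S'(e)` with `D_K = Card E_K`. -/
noncomputable def innerE (K : ℕ) (S S' : Edge K → ℝ) : ℝ :=
  (∑ e ∈ EK K, S e * S' e) / ((EK K).card : ℝ)

/-- A vector field on `G_K`: antisymmetric on non-loop edges (reversing a non-loop edge
of `E_K` yields again an edge of `E_K`, with the opposite sign), with opposite values on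
the two loops at each vertex. -/
def IsVectorField (K : ℕ) (S : Edge K → ℝ) : Prop :=
  (∀ e ∈ EK K, ∀ e' ∈ EK K, e.2.1 ≠ e.2.2 → e'.2.1 = e.2.2 → e'.2.2 = e.2.1 →
    S e = - S e') ∧
  (∀ a : Fin K → ℤ, (true, (a, a)) ∈ EK K → S (true, (a, a)) = - S (false, (a, a)))

/-- The state space `𝒮_K` of `K`-step walks in `ℤ`. -/
def SK (K : ℕ) : Set (Fin (K + 1) → ℤ) :=
  {z | ∀ i : Fin K, |z i.succ - z i.castSucc| = 1}

/-- `w` is a possible next position for the constrained walk at `z`. -/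
def Adjacent (K : ℕ) (z w : Fin (K + 1) → ℤ) : Prop :=
  w ∈ SK K ∧ ∀ i : Fin (K + 1), |w i - z i| = 1

/-- The shape map `δ(z) = (z⁽²⁾ - z⁽¹⁾, …, z⁽ᴷ⁺¹⁾ - z⁽ᴷ⁾)`. -/
def deltaS (K : ℕ) (z : Fin (K + 1) → ℤ) : Fin K → ℤ :=
  fun i => z i.succ - z i.castSucc

end CRW

open Finset

namespace CRWAux

variable {K : ℕ}

/-- alternating subset condition, first sign `+`. -/
def AltP (a : Fin K → ℤ) (S : Finset (Fin K)) : Prop :=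
  ∀ i ∈ S, a i = (-1 : ℤ) ^ ((S.filter (· < i)).card)

/-- alternating subset condition, first sign `-`. -/
def AltM (a : Fin K → ℤ) (S : Finset (Fin K)) : Prop :=
  ∀ i ∈ S, a i = -(-1 : ℤ) ^ ((S.filter (· < i)).card)

instance (a : Fin K → ℤ) : DecidablePred (AltP a) := fun _ => by
  unfold AltP; infer_instance

instance (a : Fin K → ℤ) : DecidablePred (AltM a) := fun _ => by
  unfold AltM; infer_instance

lemma zero_not_mem_map (T : Finset (Fin K)) :
    (0 : Fin (K+1)) ∉ T.map (Fin.succEmb K) := by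
  simp only [Finset.mem_map, Fin.succEmb]
  rintro ⟨t, -, ht⟩
  exact Fin.succ_ne_zero t ht

lemma preimage_map (S : Finset (Fin (K+1))) (h : (0 : Fin (K+1)) ∉ S) :
    (univ.filter (fun t : Fin K => t.succ ∈ S)).map (Fin.succEmb K) = S := by
  ext i
  simp only [Finset.mem_map, Finset.mem_filter, Finset.mem_univ, true_and, Fin.succEmb]
  constructor
  · rintro ⟨t, ht, rfl⟩; exact ht
  · intro hi
    rcases Fin.eq_zero_or_eq_succ i with rfl | ⟨t, rfl⟩
    · exact absurd hi h
    · exact ⟨t, hi, rfl⟩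

lemma preimage_insert (S : Finset (Fin (K+1))) (h : (0 : Fin (K+1)) ∈ S) :
    insert 0 ((univ.filter (fun t : Fin K => t.succ ∈ S)).map (Fin.succEmb K)) = S := by
  ext i
  simp only [Finset.mem_insert, Finset.mem_map, Finset.mem_filter, Finset.mem_univ, true_and,
    Fin.succEmb]
  constructor
  · rintro (rfl | ⟨t, ht, rfl⟩)
    · exact h
    · exact ht
  · intro hi
    rcases Fin.eq_zero_or_eq_succ i with rfl | ⟨t, rfl⟩
    · exact Or.inl rfl
    · exact Or.inr ⟨t, hi, rfl⟩

lemma sum_subsets {M : Type*} [AddCommMonoid M] (g : Finset (Fin (K+1)) → M) :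
    ∑ S : Finset (Fin (K+1)), g S =
      ∑ T : Finset (Fin K), g (T.map (Fin.succEmb K)) +
      ∑ T : Finset (Fin K), g (insert 0 (T.map (Fin.succEmb K))) := by
  have h1 : ∑ S ∈ univ.filter (fun S : Finset (Fin (K+1)) => (0 : Fin (K+1)) ∉ S), g S =
      ∑ T : Finset (Fin K), g (T.map (Fin.succEmb K)) := by
    refine Finset.sum_nbij' (fun S => univ.filter (fun t : Fin K => t.succ ∈ S))
      (fun T => T.map (Fin.succEmb K)) ?_ ?_ ?_ ?_ ?_
    · intro S _; exact Finset.mem_univ _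
    · intro T _
      simp only [Finset.mem_filter, Finset.mem_univ, true_and]
      exact zero_not_mem_map _
    · intro S hS
      simp only [Finset.mem_filter, Finset.mem_univ, true_and] at hS
      exact preimage_map S hS
    · intro T _
      ext t
      simp [Fin.succEmb, (Fin.succ_injective K).eq_iff]
    · intro S hS
      simp only [Finset.mem_filter, Finset.mem_univ, true_and] at hS
      exact congrArg g (preimage_map S hS).symm
  have h2 : ∑ S ∈ univ.filter (fun S : Finset (Fin (K+1)) => ¬ (0 : Fin (K+1)) ∉ S), g S =
      ∑ T : Finset (Fin K), g (insert 0 (T.map (Fin.succEmb K))) := by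
    refine Finset.sum_nbij' (fun S => univ.filter (fun t : Fin K => t.succ ∈ S))
      (fun T => insert 0 (T.map (Fin.succEmb K))) ?_ ?_ ?_ ?_ ?_
    · intro S _; exact Finset.mem_univ _
    · intro T _
      simp only [Finset.mem_filter, Finset.mem_univ, true_and, not_not]
      exact Finset.mem_insert_self _ _
    · intro S hS
      simp only [Finset.mem_filter, Finset.mem_univ, true_and, not_not] at hS
      exact preimage_insert S hS
    · intro T _
      ext t
      simp [Fin.succEmb, (Fin.succ_injective K).eq_iff, Fin.succ_ne_zero]
    · intro S hS
      simp only [Finset.mem_filter, Finset.mem_univ, true_and, not_not] at hS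
      exact congrArg g (preimage_insert S hS).symm
  calc ∑ S : Finset (Fin (K+1)), g S
      = ∑ S ∈ univ.filter (fun S : Finset (Fin (K+1)) => (0 : Fin (K+1)) ∉ S), g S +
        ∑ S ∈ univ.filter (fun S : Finset (Fin (K+1)) => ¬ (0 : Fin (K+1)) ∉ S), g S :=
        (Finset.sum_filter_add_sum_filter_not _ _ _).symm
    _ = _ := by rw [h1, h2]

lemma filter_lt_map (T : Finset (Fin K)) (t : Fin K) :
    ((T.map (Fin.succEmb K)).filter (· < Fin.succ t)).card = (T.filter (· < t)).card := by
  rw [Finset.filter_map, Finset.card_map]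
  congr 1
  apply Finset.filter_congr
  intro j _
  simp [Fin.succEmb, Fin.succ_lt_succ_iff]

lemma filter_lt_insert0 (T : Finset (Fin K)) (t : Fin K) :
    ((insert 0 (T.map (Fin.succEmb K))).filter (· < Fin.succ t)).card =
      (T.filter (· < t)).card + 1 := by
  rw [Finset.filter_insert]
  have h0 : (0 : Fin (K+1)) < Fin.succ t := Fin.succ_pos t
  rw [if_pos h0, Finset.card_insert_of_notMem, filter_lt_map]
  intro h
  exact zero_not_mem_map T (Finset.mem_of_mem_filter _ h)

lemma filter_lt_zero (S : Finset (Fin (K+1))) : S.filter (· < (0 : Fin (K+1))) = ∅ := by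
  apply Finset.filter_false_of_mem
  intro i _
  exact Fin.not_lt_zero i

lemma altP_map (x : ℤ) (b : Fin K → ℤ) (T : Finset (Fin K)) :
    AltP (Fin.cons x b) (T.map (Fin.succEmb K)) ↔ AltP b T := by
  unfold AltP
  rw [Finset.forall_mem_map]
  simp only [Fin.coe_succEmb]
  apply forall_congr'
  intro t
  apply imp_congr Iff.rfl
  erw [Fin.cons_succ, filter_lt_map]

lemma altM_map (x : ℤ) (b : Fin K → ℤ) (T : Finset (Fin K)) :
    AltM (Fin.cons x b) (T.map (Fin.succEmb K)) ↔ AltM b T := by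
  unfold AltM
  rw [Finset.forall_mem_map]
  simp only [Fin.coe_succEmb]
  apply forall_congr'
  intro t
  apply imp_congr Iff.rfl
  erw [Fin.cons_succ, filter_lt_map]

lemma altP_insert (x : ℤ) (b : Fin K → ℤ) (T : Finset (Fin K)) :
    AltP (Fin.cons x b) (insert 0 (T.map (Fin.succEmb K))) ↔ (x = 1 ∧ AltM b T) := by
  unfold AltP AltM
  rw [Finset.forall_mem_insert]
  apply and_congr
  · rw [filter_lt_zero, Finset.card_empty, pow_zero, Fin.cons_zero]
  · rw [Finset.forall_mem_map]
    simp only [Fin.coe_succEmb]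
    apply forall_congr'
    intro t
    apply imp_congr Iff.rfl
    erw [Fin.cons_succ, filter_lt_insert0, pow_succ, mul_neg_one]

lemma altM_insert (x : ℤ) (b : Fin K → ℤ) (T : Finset (Fin K)) :
    AltM (Fin.cons x b) (insert 0 (T.map (Fin.succEmb K))) ↔ (x = -1 ∧ AltP b T) := by
  unfold AltP AltM
  rw [Finset.forall_mem_insert]
  apply and_congr
  · rw [filter_lt_zero, Finset.card_empty, pow_zero, Fin.cons_zero]
  · rw [Finset.forall_mem_map]
    simp only [Fin.coe_succEmb]
    apply forall_congr'
    intro t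
    apply imp_congr Iff.rfl
    erw [Fin.cons_succ, filter_lt_insert0, pow_succ, mul_neg_one, neg_neg]



def AeZ (a : Fin K → ℤ) : ℤ := ∑ S ∈ univ.filter (AltP a), if Even S.card then 1 else 0
def AoZ (a : Fin K → ℤ) : ℤ := ∑ S ∈ univ.filter (AltP a), if Even S.card then 0 else 1
def BeZ (a : Fin K → ℤ) : ℤ := ∑ S ∈ univ.filter (AltM a), if Even S.card then 1 else 0
def BoZ (a : Fin K → ℤ) : ℤ := ∑ S ∈ univ.filter (AltM a), if Even S.card then 0 else 1
def Up (a : Fin K → ℤ) : ℤ := ∑ S ∈ univ.filter (AltP a), ∑ i ∈ S, a i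
def Um (a : Fin K → ℤ) : ℤ := ∑ S ∈ univ.filter (AltM a), ∑ i ∈ S, a i
def Wp (a : Fin K → ℤ) : ℤ := ∑ S ∈ univ.filter (AltP a), ∑ i ∈ S, (i : ℤ) * a i
def Wm (a : Fin K → ℤ) : ℤ := ∑ S ∈ univ.filter (AltM a), ∑ i ∈ S, (i : ℤ) * a i

lemma sum_altP_cons (x : ℤ) (b : Fin K → ℤ) (g : Finset (Fin (K+1)) → ℤ) :
    ∑ S ∈ univ.filter (AltP (Fin.cons x b)), g S =
      ∑ T ∈ univ.filter (AltP b), g (T.map (Fin.succEmb K)) +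
      (if x = 1 then ∑ T ∈ univ.filter (AltM b), g (insert 0 (T.map (Fin.succEmb K)))
        else 0) := by
  rw [Finset.sum_filter, sum_subsets (fun S => if AltP (Fin.cons x b) S then g S else 0)]
  congr 1
  · rw [Finset.sum_filter]
    exact Finset.sum_congr rfl fun T _ => by simp only [altP_map]
  · by_cases hx : x = 1
    · rw [if_pos hx, Finset.sum_filter]
      exact Finset.sum_congr rfl fun T _ => by simp only [altP_insert, hx, true_and]
    · rw [if_neg hx]
      exact Finset.sum_eq_zero fun T _ => by simp [altP_insert, hx]

lemma sum_altM_cons (x : ℤ) (b : Fin K → ℤ) (g : Finset (Fin (K+1)) → ℤ) :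
    ∑ S ∈ univ.filter (AltM (Fin.cons x b)), g S =
      ∑ T ∈ univ.filter (AltM b), g (T.map (Fin.succEmb K)) +
      (if x = -1 then ∑ T ∈ univ.filter (AltP b), g (insert 0 (T.map (Fin.succEmb K)))
        else 0) := by
  rw [Finset.sum_filter, sum_subsets (fun S => if AltM (Fin.cons x b) S then g S else 0)]
  congr 1
  · rw [Finset.sum_filter]
    exact Finset.sum_congr rfl fun T _ => by simp only [altM_map]
  · by_cases hx : x = -1
    · rw [if_pos hx, Finset.sum_filter]
      exact Finset.sum_congr rfl fun T _ => by simp only [altM_insert, hx, true_and]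
    · rw [if_neg hx]
      exact Finset.sum_eq_zero fun T _ => by simp [altM_insert, hx]

lemma card_map_emb (T : Finset (Fin K)) : (T.map (Fin.succEmb K)).card = T.card :=
  Finset.card_map _

lemma card_insert_map (T : Finset (Fin K)) :
    (insert 0 (T.map (Fin.succEmb K))).card = T.card + 1 := by
  rw [Finset.card_insert_of_notMem (zero_not_mem_map T), Finset.card_map]

lemma sum_vals_map (x : ℤ) (b : Fin K → ℤ) (T : Finset (Fin K)) :
    ∑ i ∈ T.map (Fin.succEmb K), (Fin.cons x b : Fin (K+1) → ℤ) i = ∑ t ∈ T, b t := by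
  rw [Finset.sum_map]
  exact Finset.sum_congr rfl fun t _ => by
    simp only [Fin.succEmb, Function.Embedding.coeFn_mk, Fin.cons_succ]

lemma sum_vals_insert (x : ℤ) (b : Fin K → ℤ) (T : Finset (Fin K)) :
    ∑ i ∈ insert 0 (T.map (Fin.succEmb K)), (Fin.cons x b : Fin (K+1) → ℤ) i = x + ∑ t ∈ T, b t := by
  rw [Finset.sum_insert (zero_not_mem_map T), sum_vals_map, Fin.cons_zero]

lemma sum_wvals_map (x : ℤ) (b : Fin K → ℤ) (T : Finset (Fin K)) :
    ∑ i ∈ T.map (Fin.succEmb K), (i : ℤ) * (Fin.cons x b : Fin (K+1) → ℤ) i =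
      (∑ t ∈ T, (t : ℤ) * b t) + ∑ t ∈ T, b t := by
  rw [Finset.sum_map, ← Finset.sum_add_distrib]
  refine Finset.sum_congr rfl fun t _ => ?_
  simp only [Fin.succEmb, Function.Embedding.coeFn_mk, Fin.cons_succ, Fin.val_succ]
  push_cast
  ring

lemma sum_wvals_insert (x : ℤ) (b : Fin K → ℤ) (T : Finset (Fin K)) :
    ∑ i ∈ insert 0 (T.map (Fin.succEmb K)), (i : ℤ) * (Fin.cons x b : Fin (K+1) → ℤ) i =
      (∑ t ∈ T, (t : ℤ) * b t) + ∑ t ∈ T, b t := by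
  rw [Finset.sum_insert (zero_not_mem_map T), sum_wvals_map]
  norm_num

lemma cardP_eq (b : Fin K → ℤ) :
    ∑ T ∈ univ.filter (AltP b), (1 : ℤ) = AeZ b + AoZ b := by
  unfold AeZ AoZ
  rw [← Finset.sum_add_distrib]
  exact Finset.sum_congr rfl fun T _ => by by_cases h : Even T.card <;> simp [h]

lemma cardM_eq (b : Fin K → ℤ) :
    ∑ T ∈ univ.filter (AltM b), (1 : ℤ) = BeZ b + BoZ b := by
  unfold BeZ BoZ
  rw [← Finset.sum_add_distrib]
  exact Finset.sum_congr rfl fun T _ => by by_cases h : Even T.card <;> simp [h]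

lemma AeZ_cons (x : ℤ) (b : Fin K → ℤ) :
    AeZ (Fin.cons x b) = AeZ b + (if x = 1 then BoZ b else 0) := by
  unfold AeZ BoZ
  rw [sum_altP_cons x b (fun S => if Even S.card then 1 else 0)]
  congr 1
  · exact Finset.sum_congr rfl fun T _ => by rw [card_map_emb]
  · split_ifs with hx
    · exact Finset.sum_congr rfl fun T _ => by
        rw [card_insert_map]
        by_cases h : Even T.card <;> simp [h, Nat.even_add_one]
    · rfl

lemma AoZ_cons (x : ℤ) (b : Fin K → ℤ) :
    AoZ (Fin.cons x b) = AoZ b + (if x = 1 then BeZ b else 0) := by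
  unfold AoZ BeZ
  rw [sum_altP_cons x b (fun S => if Even S.card then 0 else 1)]
  congr 1
  · exact Finset.sum_congr rfl fun T _ => by rw [card_map_emb]
  · split_ifs with hx
    · exact Finset.sum_congr rfl fun T _ => by
        rw [card_insert_map]
        by_cases h : Even T.card <;> simp [h, Nat.even_add_one]
    · rfl

lemma BeZ_cons (x : ℤ) (b : Fin K → ℤ) :
    BeZ (Fin.cons x b) = BeZ b + (if x = -1 then AoZ b else 0) := by
  unfold BeZ AoZ
  rw [sum_altM_cons x b (fun S => if Even S.card then 1 else 0)]
  congr 1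
  · exact Finset.sum_congr rfl fun T _ => by rw [card_map_emb]
  · split_ifs with hx
    · exact Finset.sum_congr rfl fun T _ => by
        rw [card_insert_map]
        by_cases h : Even T.card <;> simp [h, Nat.even_add_one]
    · rfl

lemma BoZ_cons (x : ℤ) (b : Fin K → ℤ) :
    BoZ (Fin.cons x b) = BoZ b + (if x = -1 then AeZ b else 0) := by
  unfold BoZ AeZ
  rw [sum_altM_cons x b (fun S => if Even S.card then 0 else 1)]
  congr 1
  · exact Finset.sum_congr rfl fun T _ => by rw [card_map_emb]
  · split_ifs with hx
    · exact Finset.sum_congr rfl fun T _ => by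
        rw [card_insert_map]
        by_cases h : Even T.card <;> simp [h, Nat.even_add_one]
    · rfl

lemma Up_cons (x : ℤ) (b : Fin K → ℤ) :
    Up (Fin.cons x b) = Up b + (if x = 1 then (BeZ b + BoZ b) + Um b else 0) := by
  unfold Up Um
  rw [sum_altP_cons x b (fun S : Finset (Fin (K+1)) => ∑ i ∈ S, (Fin.cons x b : Fin (K+1) → ℤ) i)]
  congr 1
  · exact Finset.sum_congr rfl fun T _ => sum_vals_map x b T
  · split_ifs with hx
    · rw [← cardM_eq, ← Finset.sum_add_distrib]
      exact Finset.sum_congr rfl fun T _ => by rw [sum_vals_insert, hx]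
    · rfl

lemma Um_cons (x : ℤ) (b : Fin K → ℤ) :
    Um (Fin.cons x b) = Um b + (if x = -1 then (-(AeZ b + AoZ b)) + Up b else 0) := by
  unfold Um Up
  rw [sum_altM_cons x b (fun S : Finset (Fin (K+1)) => ∑ i ∈ S, (Fin.cons x b : Fin (K+1) → ℤ) i)]
  congr 1
  · exact Finset.sum_congr rfl fun T _ => sum_vals_map x b T
  · split_ifs with hx
    · rw [← cardP_eq, ← Finset.sum_neg_distrib, ← Finset.sum_add_distrib]
      exact Finset.sum_congr rfl fun T _ => by rw [sum_vals_insert, hx]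
    · rfl

lemma Wp_cons (x : ℤ) (b : Fin K → ℤ) :
    Wp (Fin.cons x b) = (Wp b + Up b) + (if x = 1 then Wm b + Um b else 0) := by
  unfold Wp Up Wm Um
  rw [sum_altP_cons x b (fun S : Finset (Fin (K+1)) => ∑ i ∈ S, (i : ℤ) * (Fin.cons x b : Fin (K+1) → ℤ) i)]
  congr 1
  · rw [← Finset.sum_add_distrib]
    exact Finset.sum_congr rfl fun T _ => sum_wvals_map x b T
  · split_ifs with hx
    · rw [← Finset.sum_add_distrib]
      exact Finset.sum_congr rfl fun T _ => sum_wvals_insert x b T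
    · rfl

lemma Wm_cons (x : ℤ) (b : Fin K → ℤ) :
    Wm (Fin.cons x b) = (Wm b + Um b) + (if x = -1 then Wp b + Up b else 0) := by
  unfold Wp Up Wm Um
  rw [sum_altM_cons x b (fun S : Finset (Fin (K+1)) => ∑ i ∈ S, (i : ℤ) * (Fin.cons x b : Fin (K+1) → ℤ) i)]
  congr 1
  · rw [← Finset.sum_add_distrib]
    exact Finset.sum_congr rfl fun T _ => sum_wvals_map x b T
  · split_ifs with hx
    · rw [← Finset.sum_add_distrib]
      exact Finset.sum_congr rfl fun T _ => sum_wvals_insert x b T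
    · rfl

lemma invariants : ∀ (K : ℕ) (a : Fin K → ℤ), (∀ i, a i = 1 ∨ a i = -1) →
    Up a = AoZ a ∧ Um a = -(BoZ a) ∧
    2 * Wp a = (K : ℤ) * AoZ a - ((K : ℤ) + 1) * AeZ a + BeZ a + BoZ a ∧
    2 * Wm a = ((K : ℤ) + 1) * BeZ a - (K : ℤ) * BoZ a - AeZ a - AoZ a := by
  intro K
  induction K with
  | zero =>
    intro a _
    have hP : AltP a ∅ := fun i hi => absurd hi (Finset.notMem_empty i)
    have hM : AltM a ∅ := fun i hi => absurd hi (Finset.notMem_empty i)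
    have huniv : (univ : Finset (Finset (Fin 0))) = {∅} :=
      Finset.eq_singleton_iff_unique_mem.mpr
        ⟨Finset.mem_univ _, fun S _ => Finset.eq_empty_of_isEmpty S⟩
    unfold Up Um Wp Wm AeZ AoZ BeZ BoZ
    rw [huniv]
    simp [Finset.filter_singleton, hP, hM]
  | succ K ih =>
    have key : ∀ (x : ℤ) (b : Fin K → ℤ), (x = 1 ∨ x = -1) →
        (∀ t, b t = 1 ∨ b t = -1) →
        Up (Fin.cons x b) = AoZ (Fin.cons x b) ∧
        Um (Fin.cons x b) = -(BoZ (Fin.cons x b)) ∧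
        2 * Wp (Fin.cons x b) = ((K+1 : ℕ) : ℤ) * AoZ (Fin.cons x b) -
          (((K+1 : ℕ) : ℤ) + 1) * AeZ (Fin.cons x b) + BeZ (Fin.cons x b) +
          BoZ (Fin.cons x b) ∧
        2 * Wm (Fin.cons x b) = (((K+1 : ℕ) : ℤ) + 1) * BeZ (Fin.cons x b) -
          ((K+1 : ℕ) : ℤ) * BoZ (Fin.cons x b) - AeZ (Fin.cons x b) -
          AoZ (Fin.cons x b) := by
      intro x b hx hb
      obtain ⟨h1, h2, h3, h4⟩ := ih b hb
      rw [Up_cons, Um_cons, Wp_cons, Wm_cons, AeZ_cons, AoZ_cons, BeZ_cons, BoZ_cons]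
      push_cast
      rcases hx with rfl | rfl
      · norm_num
        refine ⟨by linarith, by linarith, by linarith, by linarith⟩
      · norm_num
        refine ⟨by linarith, by linarith, by linarith, by linarith⟩
    intro a ha
    have h := key (a 0) (Fin.tail a) (ha 0) (fun t => ha t.succ)
    rwa [Fin.cons_self_tail] at h

end CRWAux

namespace CRWAux

variable {K : ℕ}

/-- Flip the coordinates of `a` in `S`. -/
def flip (a : Fin K → ℤ) (S : Finset (Fin K)) : Fin K → ℤ :=
  fun i => if i ∈ S then -a i else a i

lemma mem_V_iff {a : Fin K → ℤ} : a ∈ CRW.V K ↔ ∀ i, a i = 1 ∨ a i = -1 := by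
  unfold CRW.V
  rw [Fintype.mem_piFinset]
  apply forall_congr'
  intro i
  rw [Finset.mem_insert, Finset.mem_singleton]
  tauto

lemma flip_mem_V {a : Fin K → ℤ} (ha : a ∈ CRW.V K) (S : Finset (Fin K)) :
    flip a S ∈ CRW.V K := by
  rw [mem_V_iff] at ha ⊢
  intro i
  unfold flip
  rcases ha i with h | h <;> by_cases hi : i ∈ S <;> simp [h, hi]

lemma flip_sub (a : Fin K → ℤ) (S : Finset (Fin K)) (i : Fin K) :
    flip a S i - a i = if i ∈ S then -2 * a i else 0 := by
  unfold flip
  by_cases hi : i ∈ S <;> simp [hi] <;> ring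

lemma flip_sub_ne {a : Fin K → ℤ} (ha : ∀ i, a i = 1 ∨ a i = -1) (S : Finset (Fin K))
    (i : Fin K) : flip a S i - a i ≠ 0 ↔ i ∈ S := by
  rw [flip_sub]
  by_cases hi : i ∈ S <;> simp [hi]
  rcases ha i with h | h <;> simp [h]

lemma diffset_flip {a : Fin K → ℤ} (ha : ∀ i, a i = 1 ∨ a i = -1) (S : Finset (Fin K)) :
    univ.filter (fun i => flip a S i ≠ a i) = S := by
  ext i
  rw [Finset.mem_filter]
  have := flip_sub_ne ha S i
  rw [sub_ne_zero] at this
  simp only [Finset.mem_univ, true_and]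
  exact this

lemma flip_diffset {a b : Fin K → ℤ} (ha : ∀ i, a i = 1 ∨ a i = -1)
    (hb : ∀ i, b i = 1 ∨ b i = -1) :
    flip a (univ.filter (fun i => b i ≠ a i)) = b := by
  funext i
  unfold flip
  by_cases h : b i = a i
  · simp [h]
  · have : i ∈ univ.filter (fun i => b i ≠ a i) := by simp [h]
    rw [if_pos this]
    rcases ha i with h1 | h1 <;> rcases hb i with h2 | h2 <;>
      simp_all <;> omega

lemma count_eq {a b : Fin K → ℤ} (ha : ∀ i, a i = 1 ∨ a i = -1) (S : Finset (Fin K))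
    (hS : b = flip a S) (i : Fin K) :
    (univ.filter fun j : Fin K => j < i ∧ b j - a j ≠ 0).card =
      (S.filter (· < i)).card := by
  congr 1
  ext j
  subst hS
  simp only [Finset.mem_filter, Finset.mem_univ, true_and, flip_sub_ne ha]
  tauto

lemma neg_two_cancel {y z : ℤ} (h : -2 * y = -2 * z) : y = z :=
  mul_left_cancel₀ (by norm_num : (-2 : ℤ) ≠ 0) h

lemma altNeg_flip {a : Fin K → ℤ} (ha : ∀ i, a i = 1 ∨ a i = -1) (S : Finset (Fin K)) :
    CRW.AltNeg K a (flip a S) ↔ AltP a S := by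
  constructor
  · intro h i hi
    have hne : flip a S i - a i ≠ 0 := (flip_sub_ne ha S i).mpr hi
    have := h i hne
    rw [flip_sub, if_pos hi, count_eq ha S rfl] at this
    apply neg_two_cancel
    rw [this, pow_succ]
    ring
  · intro h i hne
    have hi : i ∈ S := (flip_sub_ne ha S i).mp hne
    rw [flip_sub, if_pos hi, count_eq ha S rfl, h i hi, pow_succ]
    ring

lemma altPos_flip {a : Fin K → ℤ} (ha : ∀ i, a i = 1 ∨ a i = -1) (S : Finset (Fin K)) :
    CRW.AltPos K a (flip a S) ↔ AltM a S := by
  constructor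
  · intro h i hi
    have hne : flip a S i - a i ≠ 0 := (flip_sub_ne ha S i).mpr hi
    have := h i hne
    rw [flip_sub, if_pos hi, count_eq ha S rfl] at this
    have h2 : -2 * a i = -2 * (-(-1 : ℤ) ^ (S.filter (· < i)).card) := by
      rw [this]; ring
    exact neg_two_cancel h2
  · intro h i hne
    have hi : i ∈ S := (flip_sub_ne ha S i).mp hne
    rw [flip_sub, if_pos hi, count_eq ha S rfl, h i hi]
    ring

lemma mem_eplus_flip {a : Fin K → ℤ} (ha : a ∈ CRW.V K) {S : Finset (Fin K)}
    (hS : AltP a S) : (a, flip a S) ∈ CRW.Eplus K := by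
  unfold CRW.Eplus
  rw [Finset.mem_filter, Finset.mem_product]
  exact ⟨⟨ha, flip_mem_V ha S⟩,
    Or.inr ((altNeg_flip (mem_V_iff.mp ha) S).mpr hS)⟩

lemma mem_eminus_flip {a : Fin K → ℤ} (ha : a ∈ CRW.V K) {S : Finset (Fin K)}
    (hS : AltM a S) : (a, flip a S) ∈ CRW.Eminus K := by
  unfold CRW.Eminus
  rw [Finset.mem_filter, Finset.mem_product]
  exact ⟨⟨ha, flip_mem_V ha S⟩,
    Or.inr ((altPos_flip (mem_V_iff.mp ha) S).mpr hS)⟩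

lemma eplus_diffset {a b : Fin K → ℤ} (ha : a ∈ CRW.V K)
    (hab : (a, b) ∈ CRW.Eplus K) :
    b ∈ CRW.V K ∧ AltP a (univ.filter (fun i => b i ≠ a i)) ∧
      flip a (univ.filter (fun i => b i ≠ a i)) = b := by
  unfold CRW.Eplus at hab
  rw [Finset.mem_filter, Finset.mem_product] at hab
  obtain ⟨⟨-, hbV⟩, hor⟩ := hab
  have ha' := mem_V_iff.mp ha
  have hb' := mem_V_iff.mp hbV
  have hflip := flip_diffset ha' hb'
  refine ⟨hbV, ?_, hflip⟩
  rcases hor with heq | halt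
  · have hba : b = a := heq.symm
    have : univ.filter (fun i => b i ≠ a i) = (∅ : Finset (Fin K)) := by
      subst hba
      ext i; simp
    rw [this]
    exact fun i hi => absurd hi (Finset.notMem_empty i)
  · rw [← altNeg_flip ha', hflip]
    exact halt

lemma eminus_diffset {a b : Fin K → ℤ} (ha : a ∈ CRW.V K)
    (hab : (a, b) ∈ CRW.Eminus K) :
    b ∈ CRW.V K ∧ AltM a (univ.filter (fun i => b i ≠ a i)) ∧
      flip a (univ.filter (fun i => b i ≠ a i)) = b := by
  unfold CRW.Eminus at hab
  rw [Finset.mem_filter, Finset.mem_product] at hab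
  obtain ⟨⟨-, hbV⟩, hor⟩ := hab
  have ha' := mem_V_iff.mp ha
  have hb' := mem_V_iff.mp hbV
  have hflip := flip_diffset ha' hb'
  refine ⟨hbV, ?_, hflip⟩
  rcases hor with heq | halt
  · have hba : b = a := heq.symm
    have : univ.filter (fun i => b i ≠ a i) = (∅ : Finset (Fin K)) := by
      subst hba
      ext i; simp
    rw [this]
    exact fun i hi => absurd hi (Finset.notMem_empty i)
  · rw [← altPos_flip ha', hflip]
    exact halt

end CRWAux

namespace CRWAux

variable {K : ℕ}

lemma sum_eplus {a : Fin K → ℤ} (ha : a ∈ CRW.V K) (g : (Fin K → ℤ) → ℤ) :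
    ∑ p ∈ (CRW.Eplus K).filter (fun p => p.1 = a), g p.2 =
      ∑ S ∈ univ.filter (AltP a), g (flip a S) := by
  have ha' := mem_V_iff.mp ha
  refine Finset.sum_nbij' (fun p => univ.filter (fun i => p.2 i ≠ a i))
    (fun S => ((a, flip a S) : (Fin K → ℤ) × (Fin K → ℤ))) ?_ ?_ ?_ ?_ ?_
  · intro p hp
    rw [Finset.mem_filter] at hp
    obtain ⟨hpE, hp1⟩ := hp
    have hab : (a, p.2) ∈ CRW.Eplus K := by rwa [← hp1, Prod.mk.eta]
    obtain ⟨-, hAlt, -⟩ := eplus_diffset ha hab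
    rw [Finset.mem_filter]
    exact ⟨Finset.mem_univ _, hAlt⟩
  · intro S hS
    rw [Finset.mem_filter] at hS ⊢
    exact ⟨mem_eplus_flip ha hS.2, rfl⟩
  · intro p hp
    rw [Finset.mem_filter] at hp
    obtain ⟨hpE, hp1⟩ := hp
    have hab : (a, p.2) ∈ CRW.Eplus K := by rwa [← hp1, Prod.mk.eta]
    obtain ⟨-, -, hflip⟩ := eplus_diffset ha hab
    exact Prod.ext hp1.symm hflip
  · intro S hS
    rw [Finset.mem_filter] at hS
    exact diffset_flip ha' S
  · intro p hp
    rw [Finset.mem_filter] at hp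
    obtain ⟨hpE, hp1⟩ := hp
    have hab : (a, p.2) ∈ CRW.Eplus K := by rwa [← hp1, Prod.mk.eta]
    obtain ⟨-, -, hflip⟩ := eplus_diffset ha hab
    rw [hflip]

lemma sum_eminus {a : Fin K → ℤ} (ha : a ∈ CRW.V K) (g : (Fin K → ℤ) → ℤ) :
    ∑ p ∈ (CRW.Eminus K).filter (fun p => p.1 = a), g p.2 =
      ∑ S ∈ univ.filter (AltM a), g (flip a S) := by
  have ha' := mem_V_iff.mp ha
  refine Finset.sum_nbij' (fun p => univ.filter (fun i => p.2 i ≠ a i))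
    (fun S => ((a, flip a S) : (Fin K → ℤ) × (Fin K → ℤ))) ?_ ?_ ?_ ?_ ?_
  · intro p hp
    rw [Finset.mem_filter] at hp
    obtain ⟨hpE, hp1⟩ := hp
    have hab : (a, p.2) ∈ CRW.Eminus K := by rwa [← hp1, Prod.mk.eta]
    obtain ⟨-, hAlt, -⟩ := eminus_diffset ha hab
    rw [Finset.mem_filter]
    exact ⟨Finset.mem_univ _, hAlt⟩
  · intro S hS
    rw [Finset.mem_filter] at hS ⊢
    exact ⟨mem_eminus_flip ha hS.2, rfl⟩
  · intro p hp
    rw [Finset.mem_filter] at hp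
    obtain ⟨hpE, hp1⟩ := hp
    have hab : (a, p.2) ∈ CRW.Eminus K := by rwa [← hp1, Prod.mk.eta]
    obtain ⟨-, -, hflip⟩ := eminus_diffset ha hab
    exact Prod.ext hp1.symm hflip
  · intro S hS
    rw [Finset.mem_filter] at hS
    exact diffset_flip ha' S
  · intro p hp
    rw [Finset.mem_filter] at hp
    obtain ⟨hpE, hp1⟩ := hp
    have hab : (a, p.2) ∈ CRW.Eminus K := by rwa [← hp1, Prod.mk.eta]
    obtain ⟨-, -, hflip⟩ := eminus_diffset ha hab
    rw [hflip]

lemma alphaK_eq {a : Fin K → ℤ} (ha : a ∈ CRW.V K) (k : ℕ) :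
    CRW.alphaK K k a = (univ.filter (fun S => AltP a S ∧ S.card = k)).card := by
  have ha' := mem_V_iff.mp ha
  unfold CRW.alphaK
  refine Finset.card_nbij' (fun b => univ.filter (fun i => b i ≠ a i)) (fun S => flip a S)
    ?_ ?_ ?_ ?_
  · intro b hb
    rw [Finset.mem_coe, Finset.mem_filter] at hb
    obtain ⟨hbV, hab, hcard⟩ := hb
    obtain ⟨-, hAlt, -⟩ := eplus_diffset ha hab
    rw [Finset.mem_coe, Finset.mem_filter]
    exact ⟨Finset.mem_univ _, hAlt, hcard⟩
  · intro S hS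
    rw [Finset.mem_coe, Finset.mem_filter] at hS ⊢
    obtain ⟨-, hAlt, hcard⟩ := hS
    refine ⟨flip_mem_V ha S, mem_eplus_flip ha hAlt, ?_⟩
    rw [diffset_flip ha' S, hcard]
  · intro b hb
    rw [Finset.mem_coe, Finset.mem_filter] at hb
    obtain ⟨-, hab, -⟩ := hb
    obtain ⟨-, -, hflip⟩ := eplus_diffset ha hab
    exact hflip
  · intro S hS
    exact diffset_flip ha' S

lemma abarK_eq {a : Fin K → ℤ} (ha : a ∈ CRW.V K) (k : ℕ) :
    CRW.abarK K k a = (univ.filter (fun S => AltM a S ∧ S.card = k)).card := by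
  have ha' := mem_V_iff.mp ha
  unfold CRW.abarK
  refine Finset.card_nbij' (fun b => univ.filter (fun i => b i ≠ a i)) (fun S => flip a S)
    ?_ ?_ ?_ ?_
  · intro b hb
    rw [Finset.mem_coe, Finset.mem_filter] at hb
    obtain ⟨hbV, hab, hcard⟩ := hb
    obtain ⟨-, hAlt, -⟩ := eminus_diffset ha hab
    rw [Finset.mem_coe, Finset.mem_filter]
    exact ⟨Finset.mem_univ _, hAlt, hcard⟩
  · intro S hS
    rw [Finset.mem_coe, Finset.mem_filter] at hS ⊢
    obtain ⟨-, hAlt, hcard⟩ := hS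
    refine ⟨flip_mem_V ha S, mem_eminus_flip ha hAlt, ?_⟩
    rw [diffset_flip ha' S, hcard]
  · intro b hb
    rw [Finset.mem_coe, Finset.mem_filter] at hb
    obtain ⟨-, hab, -⟩ := hb
    obtain ⟨-, -, hflip⟩ := eminus_diffset ha hab
    exact hflip
  · intro S hS
    exact diffset_flip ha' S

lemma count_card (P Q : Finset (Fin K) → Prop) [DecidablePred P] [DecidablePred Q] :
    ∑ S ∈ univ.filter P, (if Q S then (1 : ℤ) else 0) =
      ((univ.filter fun S => P S ∧ Q S).card : ℤ) := by
  rw [Finset.sum_filter, ← Finset.sum_boole]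
  exact Finset.sum_congr rfl fun S _ => by
    by_cases hp : P S <;> by_cases hq : Q S <;> simp [hp, hq]

lemma card_partition (P : Finset (Fin K) → Prop) [DecidablePred P] (Q : ℕ → Prop)
    [DecidablePred Q] :
    (univ.filter fun S => P S ∧ Q S.card).card =
      ∑ k ∈ (Finset.range (K + 1)).filter (fun k => Q k),
        (univ.filter fun S => P S ∧ S.card = k).card := by
  rw [Finset.card_eq_sum_card_fiberwise
    (f := fun S : Finset (Fin K) => S.card)
    (t := (Finset.range (K + 1)).filter (fun k => Q k)) ?_]
  · apply Finset.sum_congr rfl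
    intro k hk
    rw [Finset.mem_filter] at hk
    congr 1
    ext S
    simp only [Finset.mem_filter, Finset.mem_univ, true_and]
    constructor
    · rintro ⟨⟨hP, -⟩, hc⟩
      exact ⟨hP, hc⟩
    · rintro ⟨hP, hc⟩
      exact ⟨⟨hP, hc ▸ hk.2⟩, hc⟩
  · intro S hS
    rw [Finset.mem_coe, Finset.mem_filter] at hS ⊢
    refine ⟨Finset.mem_range.mpr ?_, hS.2.2⟩
    have h2 : S.card ≤ K := by simpa using Finset.card_le_univ S
    show S.card < K + 1
    omega

lemma AeZ_card (a : Fin K → ℤ) :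
    AeZ a = ((univ.filter fun S => AltP a S ∧ Even S.card).card : ℤ) :=
  count_card (AltP a) (fun S => Even S.card)

lemma BeZ_card (a : Fin K → ℤ) :
    BeZ a = ((univ.filter fun S => AltM a S ∧ Even S.card).card : ℤ) :=
  count_card (AltM a) (fun S => Even S.card)

lemma alphaEv_eq {a : Fin K → ℤ} (ha : a ∈ CRW.V K) :
    (CRW.alphaEv K a : ℤ) = AeZ a := by
  rw [AeZ_card]
  unfold CRW.alphaEv
  rw [card_partition (AltP a) Even]
  push_cast
  apply Finset.sum_congr rfl
  intro k _
  rw [alphaK_eq ha k]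

lemma abarEv_eq {a : Fin K → ℤ} (ha : a ∈ CRW.V K) :
    (CRW.abarEv K a : ℤ) = BeZ a := by
  rw [BeZ_card]
  unfold CRW.abarEv
  rw [card_partition (AltM a) Even]
  push_cast
  apply Finset.sum_congr rfl
  intro k _
  rw [abarK_eq ha k]

end CRWAux

namespace CRWAux

variable {K : ℕ}

def A2Z (a : Fin K → ℤ) : ℤ := ∑ S ∈ univ.filter (AltP a), if S.card = 2 then 1 else 0
def B2Z (a : Fin K → ℤ) : ℤ := ∑ S ∈ univ.filter (AltM a), if S.card = 2 then 1 else 0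
def A1Z (a : Fin K → ℤ) : ℤ := ∑ S ∈ univ.filter (AltP a), if S.card = 1 then 1 else 0
def B1Z (a : Fin K → ℤ) : ℤ := ∑ S ∈ univ.filter (AltM a), if S.card = 1 then 1 else 0

lemma A2Z_cons (x : ℤ) (b : Fin K → ℤ) :
    A2Z (Fin.cons x b) = A2Z b + (if x = 1 then B1Z b else 0) := by
  unfold A2Z B1Z
  rw [sum_altP_cons x b (fun S => if S.card = 2 then 1 else 0)]
  congr 1
  · exact Finset.sum_congr rfl fun T _ => by rw [card_map_emb]
  · split_ifs with hx
    · exact Finset.sum_congr rfl fun T _ => by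
        rw [card_insert_map]
        by_cases h : T.card = 1 <;> simp [h] <;> omega
    · rfl

lemma B2Z_cons (x : ℤ) (b : Fin K → ℤ) :
    B2Z (Fin.cons x b) = B2Z b + (if x = -1 then A1Z b else 0) := by
  unfold B2Z A1Z
  rw [sum_altM_cons x b (fun S => if S.card = 2 then 1 else 0)]
  congr 1
  · exact Finset.sum_congr rfl fun T _ => by rw [card_map_emb]
  · split_ifs with hx
    · exact Finset.sum_congr rfl fun T _ => by
        rw [card_insert_map]
        by_cases h : T.card = 1 <;> simp [h] <;> omega
    · rfl

lemma singletonP (b : Fin K → ℤ) :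
    univ.filter (fun S => AltP b S ∧ S.card = 1) =
      (univ.filter fun t => b t = 1).image (fun t => ({t} : Finset (Fin K))) := by
  ext S
  simp only [Finset.mem_filter, Finset.mem_univ, true_and, Finset.mem_image]
  constructor
  · rintro ⟨hP, hc⟩
    obtain ⟨t, rfl⟩ := Finset.card_eq_one.mp hc
    refine ⟨t, ?_, rfl⟩
    have h := hP t (Finset.mem_singleton_self t)
    rwa [Finset.filter_singleton, if_neg (lt_irrefl t), Finset.card_empty, pow_zero] at h
  · rintro ⟨t, ht, rfl⟩
    refine ⟨?_, Finset.card_singleton t⟩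
    intro i hi
    rw [Finset.mem_singleton] at hi
    subst hi
    rw [Finset.filter_singleton, if_neg (lt_irrefl i), Finset.card_empty, pow_zero]
    exact ht

lemma singletonM (b : Fin K → ℤ) :
    univ.filter (fun S => AltM b S ∧ S.card = 1) =
      (univ.filter fun t => b t = -1).image (fun t => ({t} : Finset (Fin K))) := by
  ext S
  simp only [Finset.mem_filter, Finset.mem_univ, true_and, Finset.mem_image]
  constructor
  · rintro ⟨hP, hc⟩
    obtain ⟨t, rfl⟩ := Finset.card_eq_one.mp hc
    refine ⟨t, ?_, rfl⟩
    have h := hP t (Finset.mem_singleton_self t)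
    rwa [Finset.filter_singleton, if_neg (lt_irrefl t), Finset.card_empty, pow_zero] at h
  · rintro ⟨t, ht, rfl⟩
    refine ⟨?_, Finset.card_singleton t⟩
    intro i hi
    rw [Finset.mem_singleton] at hi
    subst hi
    rw [Finset.filter_singleton, if_neg (lt_irrefl i), Finset.card_empty, pow_zero]
    exact ht

lemma A1Z_eq (b : Fin K → ℤ) :
    A1Z b = ((univ.filter fun t => b t = 1).card : ℤ) := by
  unfold A1Z
  rw [count_card (AltP b) (fun S => S.card = 1), singletonP,
    Finset.card_image_of_injective _ Finset.singleton_injective]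

lemma B1Z_eq (b : Fin K → ℤ) :
    B1Z b = ((univ.filter fun t => b t = -1).card : ℤ) := by
  unfold B1Z
  rw [count_card (AltM b) (fun S => S.card = 1), singletonM,
    Finset.card_image_of_injective _ Finset.singleton_injective]

lemma sum_pm (b : Fin K → ℤ) (hb : ∀ t, b t = 1 ∨ b t = -1) :
    ∑ t : Fin K, b t =
      ((univ.filter fun t => b t = 1).card : ℤ) -
      ((univ.filter fun t => b t = -1).card : ℤ) := by
  have h1 : ∑ t : Fin K, b t =
      ∑ t : Fin K, ((if b t = 1 then (1 : ℤ) else 0) - (if b t = -1 then (1 : ℤ) else 0)) := by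
    apply Finset.sum_congr rfl
    intro t _
    rcases hb t with h | h <;> rw [h] <;> norm_num
  rw [h1, Finset.sum_sub_distrib, Finset.sum_boole, Finset.sum_boole]

lemma card_pm (b : Fin K → ℤ) (hb : ∀ t, b t = 1 ∨ b t = -1) :
    (univ.filter fun t => b t = 1).card + (univ.filter fun t => b t = -1).card = K := by
  have h : (univ.filter fun t => b t = -1) = (univ.filter fun t => ¬ b t = 1) := by
    ext t
    simp only [Finset.mem_filter, Finset.mem_univ, true_and]
    rcases hb t with h | h <;> rw [h] <;> norm_num
  rw [h, Finset.card_filter_add_card_filter_not, Finset.card_univ, Fintype.card_fin]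

lemma f2_closed : ∀ (K : ℕ) (a : Fin K → ℤ), (∀ i, a i = 1 ∨ a i = -1) →
    2 * (A2Z a - B2Z a) = ∑ i : Fin K, ((K : ℤ) - 1 - 2 * (i : ℤ)) * a i := by
  intro K
  induction K with
  | zero =>
    intro a _
    have hP : AltP a ∅ := fun i hi => absurd hi (Finset.notMem_empty i)
    have hM : AltM a ∅ := fun i hi => absurd hi (Finset.notMem_empty i)
    have huniv : (univ : Finset (Finset (Fin 0))) = {∅} :=
      Finset.eq_singleton_iff_unique_mem.mpr
        ⟨Finset.mem_univ _, fun S _ => Finset.eq_empty_of_isEmpty S⟩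
    unfold A2Z B2Z
    rw [huniv]
    simp [Finset.filter_singleton, hP, hM]
  | succ K ih =>
    have key : ∀ (x : ℤ) (b : Fin K → ℤ), (x = 1 ∨ x = -1) →
        (∀ t, b t = 1 ∨ b t = -1) →
        2 * (A2Z (Fin.cons x b) - B2Z (Fin.cons x b)) =
          ∑ i : Fin (K+1), (((K+1 : ℕ) : ℤ) - 1 - 2 * (i : ℤ)) * (Fin.cons x b : Fin (K+1) → ℤ) i := by
      intro x b hx hb
      rw [A2Z_cons, B2Z_cons, Fin.sum_univ_succ]
      have hsum : ∀ t : Fin K,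
          (((K+1 : ℕ) : ℤ) - 1 - 2 * ((t.succ : Fin (K+1)) : ℤ)) * (Fin.cons x b : Fin (K+1) → ℤ) t.succ
            = ((K : ℤ) - 1 - 2 * (t : ℤ)) * b t - b t := by
        intro t
        rw [Fin.cons_succ]
        have : ((t.succ : Fin (K+1)) : ℤ) = (t : ℤ) + 1 := by
          simp [Fin.val_succ]
        rw [this]
        push_cast
        ring
      rw [Finset.sum_congr rfl (fun t _ => hsum t), Finset.sum_sub_distrib, ← ih b hb]
      have hzero : ((0 : Fin (K+1)) : ℤ) = 0 := rfl
      rw [Fin.cons_zero, hzero]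
      have hspm := sum_pm b hb
      have hcpm := card_pm b hb
      have hA1 := A1Z_eq b
      have hB1 := B1Z_eq b
      have hcpmZ : ((univ.filter fun t => b t = 1).card : ℤ) +
          ((univ.filter fun t => b t = -1).card : ℤ) = (K : ℤ) := by
        exact_mod_cast congrArg (Nat.cast : ℕ → ℤ) hcpm
      rcases hx with rfl | rfl
      · norm_num
        push_cast
        linarith
      · norm_num
        push_cast
        linarith
    intro a ha
    have h := key (a 0) (Fin.tail a) (ha 0) (fun t => ha t.succ)
    rwa [Fin.cons_self_tail] at h

lemma f2_eq {a : Fin K → ℤ} (ha : a ∈ CRW.V K) :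
    (CRW.f2 K a : ℤ) = A2Z a - B2Z a := by
  unfold CRW.f2
  rw [alphaK_eq ha 2, abarK_eq ha 2]
  unfold A2Z B2Z
  rw [count_card (AltP a) (fun S => S.card = 2), count_card (AltM a) (fun S => S.card = 2)]

lemma f2_formula {a : Fin K → ℤ} (ha : a ∈ CRW.V K) :
    2 * CRW.f2 K a = ∑ i : Fin K, ((K : ℤ) - 1 - 2 * (i : ℤ)) * a i := by
  rw [f2_eq ha]
  exact f2_closed K a (mem_V_iff.mp ha)

lemma f2_diff {a : Fin K → ℤ} (ha : a ∈ CRW.V K) (S : Finset (Fin K)) :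
    CRW.f2 K (flip a S) - CRW.f2 K a = -∑ i ∈ S, ((K : ℤ) - 1 - 2 * (i : ℤ)) * a i := by
  have h1 := f2_formula (flip_mem_V ha S)
  have h2 := f2_formula ha
  have h3 : 2 * (CRW.f2 K (flip a S) - CRW.f2 K a) =
      ∑ i : Fin K, ((K : ℤ) - 1 - 2 * (i : ℤ)) * (flip a S i - a i) := by
    rw [mul_sub, h1, h2, ← Finset.sum_sub_distrib]
    exact Finset.sum_congr rfl fun i _ => by ring
  have h4 : ∑ i : Fin K, ((K : ℤ) - 1 - 2 * (i : ℤ)) * (flip a S i - a i) =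
      2 * (-∑ i ∈ S, ((K : ℤ) - 1 - 2 * (i : ℤ)) * a i) := by
    have : ∀ i : Fin K, ((K : ℤ) - 1 - 2 * (i : ℤ)) * (flip a S i - a i) =
        if i ∈ S then -2 * (((K : ℤ) - 1 - 2 * (i : ℤ)) * a i) else 0 := by
      intro i
      rw [flip_sub]
      by_cases hi : i ∈ S <;> simp [hi] <;> ring
    rw [Finset.sum_congr rfl (fun i _ => this i), Finset.sum_ite_mem, Finset.univ_inter,
      ← Finset.mul_sum]
    ring
  rw [h4] at h3
  linarith

lemma phi_eq {a : Fin K → ℤ} (ha : a ∈ CRW.V K) :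
    CRW.phi K a = -((K : ℤ) - 1) * Up a + 2 * Wp a := by
  unfold CRW.phi
  have hcong : ∀ p ∈ (CRW.Eplus K).filter (fun p => p.1 = a),
      CRW.f2 K p.2 - CRW.f2 K p.1 = CRW.f2 K p.2 - CRW.f2 K a := by
    intro p hp
    rw [(Finset.mem_filter.mp hp).2]
  rw [Finset.sum_congr rfl hcong, sum_eplus ha (fun b => CRW.f2 K b - CRW.f2 K a)]
  unfold Up Wp
  rw [Finset.mul_sum, Finset.mul_sum, ← Finset.sum_add_distrib]
  apply Finset.sum_congr rfl
  intro S _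
  rw [f2_diff ha S, Finset.mul_sum, Finset.mul_sum, ← Finset.sum_add_distrib,
    ← Finset.sum_neg_distrib]
  apply Finset.sum_congr rfl
  intro i _
  ring

lemma phibar_eq {a : Fin K → ℤ} (ha : a ∈ CRW.V K) :
    CRW.phibar K a = -((K : ℤ) - 1) * Um a + 2 * Wm a := by
  unfold CRW.phibar
  have hcong : ∀ p ∈ (CRW.Eminus K).filter (fun p => p.1 = a),
      CRW.f2 K p.2 - CRW.f2 K p.1 = CRW.f2 K p.2 - CRW.f2 K a := by
    intro p hp
    rw [(Finset.mem_filter.mp hp).2]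
  rw [Finset.sum_congr rfl hcong, sum_eminus ha (fun b => CRW.f2 K b - CRW.f2 K a)]
  unfold Um Wm
  rw [Finset.mul_sum, Finset.mul_sum, ← Finset.sum_add_distrib]
  apply Finset.sum_congr rfl
  intro S _
  rw [f2_diff ha S, Finset.mul_sum, Finset.mul_sum, ← Finset.sum_add_distrib,
    ← Finset.sum_neg_distrib]
  apply Finset.sum_congr rfl
  intro i _
  ring

lemma divE_eq (K : ℕ) (a : Fin K → ℤ) :
    CRW.divE K (CRW.gradE K fun b => (CRW.f2 K b : ℝ)) a =
      ((CRW.phi K a + CRW.phibar K a : ℤ) : ℝ) := by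
  unfold CRW.divE CRW.EK CRW.gradE CRW.phi CRW.phibar
  rw [Finset.filter_union]
  rw [Finset.sum_union (by
    rw [Finset.disjoint_left]
    intro e he1 he2
    rw [Finset.mem_filter, Finset.mem_image] at he1 he2
    obtain ⟨⟨p, -, rfl⟩, -⟩ := he1
    obtain ⟨⟨q, -, hq⟩, -⟩ := he2
    exact Bool.noConfusion (congrArg Prod.fst hq))]
  have himg : ∀ (bb : Bool) (E : Finset ((Fin K → ℤ) × (Fin K → ℤ))),
      (E.image (fun p => ((bb, p) : CRW.Edge K))).filter (fun e => e.2.1 = a) =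
        (E.filter (fun p => p.1 = a)).image (fun p => ((bb, p) : CRW.Edge K)) := by
    intro bb E
    ext e
    simp only [Finset.mem_filter, Finset.mem_image]
    constructor
    · rintro ⟨⟨p, hp, rfl⟩, h2⟩
      exact ⟨p, ⟨hp, h2⟩, rfl⟩
    · rintro ⟨p, ⟨hp, h2⟩, rfl⟩
      exact ⟨⟨p, hp, rfl⟩, h2⟩
  rw [himg, himg]
  rw [Finset.sum_image (fun x _ y _ h => by injection h),
    Finset.sum_image (fun x _ y _ h => by injection h)]
  push_cast
  rfl

end CRWAux


/-- `(∇·(∇f₂))(a) = -(K+2)(α_ev(a) - ᾱ_ev(a))`. -/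
theorem statement14 (K : ℕ) (hK : 1 ≤ K) (a : Fin K → ℤ) (ha : a ∈ CRW.V K) :
    CRW.divE K (CRW.gradE K fun b => (CRW.f2 K b : ℝ)) a =
      -((K : ℝ) + 2) * ((CRW.alphaEv K a : ℝ) - (CRW.abarEv K a : ℝ)) := by
  have ha' := CRWAux.mem_V_iff.mp ha
  obtain ⟨h1, h2, h3, h4⟩ := CRWAux.invariants K a ha'
  have key : CRW.phi K a + CRW.phibar K a =
      -((K : ℤ) + 2) * ((CRW.alphaEv K a : ℤ) - (CRW.abarEv K a : ℤ)) := by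
    rw [CRWAux.phi_eq ha, CRWAux.phibar_eq ha, CRWAux.alphaEv_eq ha, CRWAux.abarEv_eq ha]
    linear_combination (-((K : ℤ) - 1)) * h1 + (-((K : ℤ) - 1)) * h2 + h3 + h4
  rw [CRWAux.divE_eq, key]
  push_cast
  ring
end

section
/- For every a ∈ V_K, the function f_2 has the explicit form f_2(a) = (1/2) Σ_{i=1}^K a_i (1 + K − 2i). -/
open Finset MeasureTheory Filter

open Finset

namespace CRWaux

variable {K : ℕ}

/-- Generic alternation condition with offset `n`. -/
def AltGen (K n : ℕ) (a b : Fin K → ℤ) : Prop :=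
  ∀ i : Fin K, b i - a i ≠ 0 →
    b i - a i =
      2 * (-1 : ℤ) ^ (((Finset.univ.filter fun j : Fin K => j < i ∧ b j - a j ≠ 0)).card + n)

lemma mem_V {a : Fin K → ℤ} : a ∈ CRW.V K ↔ ∀ i, a i = -1 ∨ a i = 1 := by
  simp [CRW.V, Fintype.mem_piFinset]

lemma filter_lt_diff {a b : Fin K → ℤ} {i j : Fin K}
    (hD : (univ.filter fun k => b k - a k ≠ 0) = {i, j}) (m : Fin K) :
    (univ.filter fun k : Fin K => k < m ∧ b k - a k ≠ 0)
      = ({i, j} : Finset (Fin K)).filter (fun k => k < m) := by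
  rw [← hD, Finset.filter_filter]
  apply Finset.filter_congr
  intro k _
  tauto

lemma altGen_iff {n : ℕ} {a b : Fin K → ℤ} {i j : Fin K} (hij : i < j)
    (hD : (univ.filter fun k => b k - a k ≠ 0) = {i, j}) :
    AltGen K n a b ↔
      (b i - a i = 2 * (-1 : ℤ) ^ n ∧ b j - a j = 2 * (-1 : ℤ) ^ (1 + n)) := by
  have hne : i ≠ j := ne_of_lt hij
  have hfi : (univ.filter fun k : Fin K => k < i ∧ b k - a k ≠ 0) = ∅ := by
    rw [filter_lt_diff hD]
    ext k
    simp only [mem_filter, mem_insert, mem_singleton, Finset.notMem_empty, iff_false, not_and]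
    rintro (rfl | rfl)
    · exact lt_irrefl _
    · intro h2; exact absurd (h2.trans hij) (lt_irrefl _)
  have hfj : (univ.filter fun k : Fin K => k < j ∧ b k - a k ≠ 0) = {i} := by
    rw [filter_lt_diff hD]
    ext k
    simp only [mem_filter, mem_insert, mem_singleton]
    constructor
    · rintro ⟨h1 | h1, h2⟩
      · exact h1
      · subst h1; exact absurd h2 (lt_irrefl _)
    · rintro rfl; exact ⟨Or.inl rfl, hij⟩
  have hi : b i - a i ≠ 0 := by
    have : i ∈ (univ.filter fun k => b k - a k ≠ 0) := by rw [hD]; simp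
    simpa using this
  have hj : b j - a j ≠ 0 := by
    have : j ∈ (univ.filter fun k => b k - a k ≠ 0) := by rw [hD]; simp
    simpa using this
  constructor
  · intro h
    refine ⟨?_, ?_⟩
    · have := h i hi; simp only [hfi, Finset.card_empty, Nat.zero_add] at this; exact this
    · have := h j hj
      simpa only [hfj, Finset.card_singleton] using this
  · rintro ⟨h1, h2⟩ m hm
    have hmem : m ∈ ({i, j} : Finset (Fin K)) := by
      have : m ∈ (univ.filter fun k => b k - a k ≠ 0) := by simpa using hm
      rwa [hD] at this
    rcases Finset.mem_insert.mp hmem with rfl | hm2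
    · simp only [hfi, Finset.card_empty, Nat.zero_add]; exact h1
    · rw [Finset.mem_singleton] at hm2; subst hm2
      simp only [hfj, Finset.card_singleton]
      exact h2

instance (K n : ℕ) (a b : Fin K → ℤ) : Decidable (AltGen K n a b) := by
  unfold AltGen; infer_instance

/-- The key counting lemma. -/
lemma card_gen (n : ℕ) (a : Fin K → ℤ) (ha : a ∈ CRW.V K) :
    ((CRW.V K).filter fun b =>
        AltGen K n a b ∧ (Finset.univ.filter fun i : Fin K => b i ≠ a i).card = 2).card
      = ((univ : Finset (Fin K × Fin K)).filter fun p =>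
          p.1 < p.2 ∧ a p.1 = -(-1 : ℤ) ^ n ∧ a p.2 = (-1 : ℤ) ^ n).card := by
  set e : ℤ := (-1 : ℤ) ^ n with he
  have he1 : e = 1 ∨ e = -1 := by
    rcases Nat.even_or_odd n with h | h
    · left; exact h.neg_one_pow
    · right; exact h.neg_one_pow
  have he2 : (-1 : ℤ) ^ (1 + n) = -e := by rw [pow_add, pow_one, he]; ring
  refine (Finset.card_bij
    (fun (p : Fin K × Fin K) _ =>
      Function.update (Function.update a p.1 e) p.2 (-e)) ?_ ?_ ?_).symm
  · -- maps into the target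
    rintro ⟨i, j⟩ hp
    simp only [mem_filter, mem_univ, true_and] at hp
    obtain ⟨hij, hai, haj⟩ := hp
    dsimp only
    have hne : i ≠ j := ne_of_lt hij
    set b : Fin K → ℤ := Function.update (Function.update a i e) j (-e) with hb
    have hbi : b i = e := by
      simp [hb, Function.update_apply, hne]
    have hbj : b j = -e := by simp [hb]
    have hbk : ∀ k, k ≠ i → k ≠ j → b k = a k := by
      intro k h1 h2
      simp [hb, Function.update_apply, h1, h2]
    have hD : (univ.filter fun k => b k - a k ≠ 0) = {i, j} := by
      ext k
      simp only [mem_filter, mem_univ, true_and, mem_insert, mem_singleton]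
      constructor
      · intro h
        by_contra hc
        push_neg at hc
        exact h (by rw [hbk k hc.1 hc.2]; ring)
      · rintro (rfl | rfl)
        · rw [hbi, hai]; rcases he1 with h | h <;> rw [h] <;> norm_num
        · rw [hbj, haj]; rcases he1 with h | h <;> rw [h] <;> norm_num
    have hD' : (univ.filter fun k => b k ≠ a k) = {i, j} := by
      rw [← hD]; apply Finset.filter_congr; intro k _
      constructor
      · intro h hc; exact h (by omega)
      · intro h hc; exact h (by omega)
    refine Finset.mem_filter.mpr ⟨?_, ?_, ?_⟩
    · rw [mem_V]; intro k
      by_cases h1 : k = j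
      · subst h1; rw [hbj]; rcases he1 with h | h <;> rw [h] <;> norm_num
      · by_cases h2 : k = i
        · subst h2; rw [hbi]; exact he1.symm
        · rw [hbk k h2 h1]; exact mem_V.mp ha k
    · rw [altGen_iff hij hD]
      exact ⟨by rw [hbi, hai]; ring, by rw [hbj, haj, he2]; ring⟩
    · rw [hD', Finset.card_insert_of_notMem (by simpa using hne), Finset.card_singleton]
  · -- injective
    rintro ⟨i, j⟩ hp ⟨i', j'⟩ hp' heq
    simp only [mem_filter, mem_univ, true_and] at hp hp'
    obtain ⟨hij, hai, haj⟩ := hp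
    obtain ⟨hij', hai', haj'⟩ := hp'
    dsimp only at heq
    have hv : ∀ (u v : Fin K), u < v → a u = -e → a v = e →
        ∀ k, Function.update (Function.update a u e) v (-e) k ≠ a k ↔ (k = u ∨ k = v) := by
      intro u v huv hau hav k
      have hne : u ≠ v := ne_of_lt huv
      constructor
      · intro h
        by_contra hc
        push_neg at hc
        exact h (by simp [Function.update_apply, hc.1, hc.2])
      · rintro (rfl | rfl)
        · rw [show Function.update (Function.update a k e) v (-e) k = e by
            simp [Function.update_apply, hne], hau]
          rcases he1 with h | h <;> rw [h] <;> norm_num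
        · rw [show Function.update (Function.update a u e) k (-e) k = -e by simp, hav]
          rcases he1 with h | h <;> rw [h] <;> norm_num
    have h1 : ∀ k : Fin K, (k = i ∨ k = j) ↔ (k = i' ∨ k = j') := by
      intro k
      rw [← hv i j hij hai haj k, ← hv i' j' hij' hai' haj' k, heq]
    have v1 : i'.val = i.val ∨ i'.val = j.val := by
      rcases (h1 i').mpr (Or.inl rfl) with h | h <;> simp [h]
    have v2 : j'.val = i.val ∨ j'.val = j.val := by
      rcases (h1 j').mpr (Or.inr rfl) with h | h <;> simp [h]
    have v3 : i.val = i'.val ∨ i.val = j'.val := by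
      rcases (h1 i).mp (Or.inl rfl) with h | h <;> simp [h]
    have hvij : i.val < j.val := hij
    have hvij' : i'.val < j'.val := hij'
    have : i.val = i'.val ∧ j.val = j'.val := by omega
    exact Prod.ext (Fin.ext this.1) (Fin.ext this.2)
  · -- surjective
    intro b hb
    simp only [mem_filter] at hb
    obtain ⟨hbV, halt, hcard⟩ := hb
    obtain ⟨i₀, j₀, hne₀, hD₀⟩ := Finset.card_eq_two.mp hcard
    have hcases : ∃ i j : Fin K, i < j ∧
        (univ.filter fun k : Fin K => b k ≠ a k) = {i, j} := by
      rcases lt_or_gt_of_ne hne₀ with h | h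
      · exact ⟨i₀, j₀, h, hD₀⟩
      · exact ⟨j₀, i₀, h, by rw [hD₀, Finset.pair_comm]⟩
    obtain ⟨i, j, hij, hD'⟩ := hcases
    have hDD : (univ.filter fun k => b k - a k ≠ 0) = {i, j} := by
      rw [← hD']; apply Finset.filter_congr; intro k _
      constructor
      · intro h hc; exact h (by omega)
      · intro h hc; exact h (by omega)
    have hiff := (altGen_iff (n := n) hij hDD).mp halt
    have h1 := hiff.1
    have h2 := hiff.2
    rw [← he] at h1
    rw [he2] at h2
    have hai : a i = -e ∧ b i = e := by
      rcases mem_V.mp ha i with h | h <;> rcases mem_V.mp hbV i with h3 | h3 <;>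
        rcases he1 with h4 | h4 <;> rw [h, h3] at h1 <;> rw [h4] at h1 ⊢ <;> omega
    have haj : a j = e ∧ b j = -e := by
      rcases mem_V.mp ha j with h | h <;> rcases mem_V.mp hbV j with h3 | h3 <;>
        rcases he1 with h4 | h4 <;> rw [h, h3] at h2 <;> rw [h4] at h2 ⊢ <;> omega
    refine ⟨(i, j), Finset.mem_filter.mpr ⟨Finset.mem_univ _, hij, hai.1, haj.1⟩, ?_⟩
    dsimp only
    funext k
    by_cases hkj : k = j
    · subst hkj; simp [haj.2]
    · by_cases hki : k = i
      · subst hki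
        rw [Function.update_apply, if_neg hkj, Function.update_self, hai.2]
      · have : k ∉ (univ.filter fun k : Fin K => b k ≠ a k) := by
          rw [hD']; simp [hki, hkj]
        simp only [mem_filter, mem_univ, true_and, not_not] at this
        rw [Function.update_apply, if_neg hkj, Function.update_apply, if_neg hki, this]

lemma alpha2_eq (a : Fin K → ℤ) (ha : a ∈ CRW.V K) :
    CRW.alphaK K 2 a = ((univ : Finset (Fin K × Fin K)).filter fun p =>
      p.1 < p.2 ∧ a p.1 = 1 ∧ a p.2 = -1).card := by
  show ((CRW.V K).filter fun b =>
    (a, b) ∈ CRW.Eplus K ∧ (Finset.univ.filter fun i : Fin K => b i ≠ a i).card = 2).card = _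
  have h1 : ∀ b ∈ CRW.V K,
      (((a, b) ∈ CRW.Eplus K ∧ (univ.filter fun i : Fin K => b i ≠ a i).card = 2) ↔
       (AltGen K 1 a b ∧ (univ.filter fun i : Fin K => b i ≠ a i).card = 2)) := by
    intro b hb
    simp only [CRW.Eplus, Finset.mem_filter, Finset.mem_product, ha, hb, true_and]
    constructor
    · rintro ⟨h | h, h2⟩
      · exfalso; subst h; simp at h2
      · exact ⟨h, h2⟩
    · rintro ⟨h, h2⟩; exact ⟨Or.inr h, h2⟩
  rw [Finset.filter_congr h1, card_gen 1 a ha]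
  norm_num

lemma abar2_eq (a : Fin K → ℤ) (ha : a ∈ CRW.V K) :
    CRW.abarK K 2 a = ((univ : Finset (Fin K × Fin K)).filter fun p =>
      p.1 < p.2 ∧ a p.1 = -1 ∧ a p.2 = 1).card := by
  show ((CRW.V K).filter fun b =>
    (a, b) ∈ CRW.Eminus K ∧ (Finset.univ.filter fun i : Fin K => b i ≠ a i).card = 2).card = _
  have h1 : ∀ b ∈ CRW.V K,
      (((a, b) ∈ CRW.Eminus K ∧ (univ.filter fun i : Fin K => b i ≠ a i).card = 2) ↔
       (AltGen K 0 a b ∧ (univ.filter fun i : Fin K => b i ≠ a i).card = 2)) := by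
    intro b hb
    simp only [CRW.Eminus, Finset.mem_filter, Finset.mem_product, ha, hb, true_and]
    constructor
    · rintro ⟨h | h, h2⟩
      · exfalso; subst h; simp at h2
      · exact ⟨h, h2⟩
    · rintro ⟨h, h2⟩; exact ⟨Or.inr h, h2⟩
  rw [Finset.filter_congr h1, card_gen 0 a ha]
  norm_num

lemma two_mul_f2 (a : Fin K → ℤ) (ha : a ∈ CRW.V K) :
    2 * CRW.f2 K a = ∑ i : Fin K, a i * ((K : ℤ) - 1 - 2 * (i : ℕ)) := by
  rw [CRW.f2, alpha2_eq a ha, abar2_eq a ha, Finset.card_filter, Finset.card_filter]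
  push_cast
  rw [mul_sub, Finset.mul_sum, Finset.mul_sum, ← Finset.sum_sub_distrib]
  have step1 : ∑ p : Fin K × Fin K,
      ((2:ℤ) * (if p.1 < p.2 ∧ a p.1 = 1 ∧ a p.2 = -1 then 1 else 0)
        - 2 * (if p.1 < p.2 ∧ a p.1 = -1 ∧ a p.2 = 1 then 1 else 0))
      = ∑ p : Fin K × Fin K, (if p.1 < p.2 then a p.1 - a p.2 else 0) := by
    apply Finset.sum_congr rfl
    intro p _
    rcases mem_V.mp ha p.1 with h | h <;> rcases mem_V.mp ha p.2 with h' | h' <;>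
      by_cases hlt : p.1 < p.2 <;> simp [h, h', hlt]
  rw [step1, Fintype.sum_prod_type]
  have split : ∀ i : Fin K, ∑ j : Fin K, (if i < j then a i - a j else 0)
      = (∑ j : Fin K, if i < j then a i else 0) - ∑ j : Fin K, (if i < j then a j else 0) := by
    intro i
    rw [← Finset.sum_sub_distrib]
    apply Finset.sum_congr rfl
    intro j _
    by_cases h : i < j <;> simp [h]
  simp only [split]
  rw [Finset.sum_sub_distrib]
  have hA : ∀ i : Fin K, (∑ j : Fin K, if i < j then a i else 0)
      = ((K : ℤ) - 1 - (i : ℕ)) * a i := by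
    intro i
    rw [← Finset.sum_filter, Finset.sum_const, Finset.filter_lt_eq_Ioi, Fin.card_Ioi]
    have hi := i.isLt
    have : ((K - 1 - (i : ℕ) : ℕ) : ℤ) = (K : ℤ) - 1 - (i : ℕ) := by omega
    rw [nsmul_eq_mul, this]
  have hB : (∑ i : Fin K, ∑ j : Fin K, if i < j then a j else 0)
      = ∑ j : Fin K, ((j : ℕ) : ℤ) * a j := by
    rw [Finset.sum_comm]
    apply Finset.sum_congr rfl
    intro j _
    rw [← Finset.sum_filter, Finset.sum_const, Finset.filter_gt_eq_Iio, Fin.card_Iio,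
      nsmul_eq_mul]
  rw [hB]
  simp only [hA]
  rw [← Finset.sum_sub_distrib]
  apply Finset.sum_congr rfl
  intro i _
  ring

end CRWaux


/-- Explicit form of `f₂`: `f₂(a) = (1/2) Σ_{i=1}^K a_i (1 + K - 2i)`
(the `i`-th coordinate, `1 ≤ i ≤ K`, is the coordinate of index `i - 1` in `Fin K`). -/
theorem statement15 (K : ℕ) (hK : 1 ≤ K) (a : Fin K → ℤ) (ha : a ∈ CRW.V K) :
    (CRW.f2 K a : ℝ) =
      (1 / 2) * ∑ i : Fin K, (a i : ℝ) * (1 + (K : ℝ) - 2 * ((i : ℕ) + 1)) := by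
  have h2 := CRWaux.two_mul_f2 a ha
  have h3 : (2 : ℝ) * (CRW.f2 K a : ℝ)
      = ∑ i : Fin K, (a i : ℝ) * ((K : ℝ) - 1 - 2 * ((i : ℕ) : ℝ)) := by
    exact_mod_cast congrArg (fun z : ℤ => (z : ℝ)) h2
  have h4 : ∑ i : Fin K, (a i : ℝ) * (1 + (K : ℝ) - 2 * ((i : ℕ) + 1))
      = ∑ i : Fin K, (a i : ℝ) * ((K : ℝ) - 1 - 2 * ((i : ℕ) : ℝ)) :=
    Finset.sum_congr rfl (fun i _ => by ring)
  rw [h4]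
  linarith
end

section
/- Let f = −((1/2) f_1 + (1/(K+2)) f_2) + K/2 on V_K. Then for every a ∈ V_K, f(a) = Σ_{i : a_i = −1} F_i^K where F_i^K = (3 + 2(K − i))/(K + 2); moreover the gradient vector field ∇f is stationary, i.e. ∇f(u,v) = f(v) − f(u) depends only on v − u for edges (u,v) ∈ E_K. -/
open Finset MeasureTheory Filter

namespace CRW
open Finset

lemma memV_iff {K : ℕ} {a : Fin K → ℤ} : a ∈ V K ↔ ∀ i, a i = -1 ∨ a i = 1 := by
  simp [V, Fintype.mem_piFinset]

def flip2 (K : ℕ) (a : Fin K → ℤ) (p : Fin K × Fin K) : Fin K → ℤ :=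
  fun k => if k = p.1 ∨ k = p.2 then -(a k) else a k

lemma alpha2_card {K : ℕ} {a : Fin K → ℤ} (ha : a ∈ V K) :
    alphaK K 2 a =
      ((univ ×ˢ univ).filter fun p : Fin K × Fin K =>
        p.1 < p.2 ∧ a p.1 = 1 ∧ a p.2 = -1).card := by
  classical
  have hav := memV_iff.mp ha
  have hane : ∀ k, a k ≠ 0 := fun k => by rcases hav k with h | h <;> simp [h]
  symm
  apply Finset.card_bij (fun p _ => flip2 K a p)
  · rintro ⟨i, j⟩ hp
    simp only [mem_filter, mem_product, mem_univ, true_and] at hp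
    obtain ⟨hij, hai, haj⟩ := hp
    set b := flip2 K a (i, j) with hbdef
    have hbk : ∀ k, b k = if k = i ∨ k = j then -(a k) else a k := fun k => rfl
    have hdiff : ∀ k, b k - a k ≠ 0 ↔ (k = i ∨ k = j) := by
      intro k
      rw [hbk k]
      by_cases h : k = i ∨ k = j
      · rw [if_pos h]
        have := hane k
        constructor
        · intro _; exact h
        · intro _ hc; omega
      · rw [if_neg h]; simp [h]
    have hbi : b i = -1 := by rw [hbk]; simp [hai]
    have hbj : b j = 1 := by rw [hbk]; simp [haj]
    have hVb : b ∈ V K := by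
      rw [memV_iff]
      intro k
      rw [hbk k]
      split_ifs with h
      · rcases hav k with h' | h' <;> simp [h']
      · exact hav k
    have hcard2 : (univ.filter fun t : Fin K => b t ≠ a t).card = 2 := by
      have : (univ.filter fun t : Fin K => b t ≠ a t) = {i, j} := by
        ext t
        simp only [mem_filter, mem_univ, true_and, mem_insert, mem_singleton]
        rw [← sub_ne_zero, hdiff]
      rw [this, Finset.card_insert_of_notMem (by simp [hij.ne]), Finset.card_singleton]
    have hEp : (a, b) ∈ Eplus K := by
      rw [Eplus, mem_filter]
      refine ⟨mem_product.mpr ⟨ha, hVb⟩, Or.inr ?_⟩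
      intro k hk
      rcases (hdiff k).mp hk with h | h
      · rw [h]
        have hfil : (univ.filter fun t : Fin K => t < i ∧ b t - a t ≠ 0) = ∅ := by
          ext t
          simp only [mem_filter, mem_univ, true_and, notMem_empty, iff_false, not_and]
          intro hlt hne
          rcases (hdiff t).mp hne with h' | h'
          · rw [h'] at hlt; exact absurd hlt (lt_irrefl _)
          · rw [h'] at hlt; exact absurd hlt (not_lt.mpr hij.le)
        rw [hfil]
        simp only [Finset.card_empty]
        rw [hbi, hai]; norm_num
      · rw [h]
        have hfil : (univ.filter fun t : Fin K => t < j ∧ b t - a t ≠ 0) = {i} := by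
          ext t
          simp only [mem_filter, mem_univ, true_and, mem_singleton]
          constructor
          · rintro ⟨hlt, hne⟩
            rcases (hdiff t).mp hne with h' | h'
            · exact h'
            · rw [h'] at hlt; exact absurd hlt (lt_irrefl _)
          · intro h''
            rw [h'']
            exact ⟨hij, (hdiff i).mpr (Or.inl rfl)⟩
        rw [hfil]
        simp only [Finset.card_singleton]
        rw [hbj, haj]; norm_num
    rw [mem_filter]
    exact ⟨hVb, hEp, hcard2⟩
  · rintro ⟨i, j⟩ hp ⟨i', j'⟩ hq heq
    simp only [mem_filter, mem_product, mem_univ, true_and] at hp hq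
    obtain ⟨hij, hai, haj⟩ := hp
    obtain ⟨hij', hai', haj'⟩ := hq
    have h1 : i = i' := by
      have := congrFun heq i
      simp only [flip2] at this
      rw [if_pos (Or.inl trivial)] at this
      by_cases h : i = i' ∨ i = j'
      · rcases h with h | h
        · exact h
        · rw [h] at hai; rw [hai] at haj'; exact absurd haj' (by norm_num)
      · rw [if_neg h] at this; rw [hai] at this; norm_num at this
    have h2 : j = j' := by
      have := congrFun heq j
      simp only [flip2] at this
      rw [if_pos (Or.inr trivial)] at this
      by_cases h : j = i' ∨ j = j'
      · rcases h with h | h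
        · rw [h] at haj; rw [haj] at hai'; exact absurd hai' (by norm_num)
        · exact h
      · rw [if_neg h] at this; rw [haj] at this; norm_num at this
    simp [h1, h2]
  · intro b hb
    simp only [mem_filter] at hb
    obtain ⟨hbV, hEp, hcard⟩ := hb
    have hbv := memV_iff.mp hbV
    obtain ⟨i, j, hij, hset⟩ := Finset.card_eq_two.mp hcard
    have key : ∀ i j : Fin K, i < j →
        (univ.filter fun k => b k ≠ a k) = ({i, j} : Finset (Fin K)) →
        ∃ p, ∃ hp : p ∈ (univ ×ˢ univ).filter fun p : Fin K × Fin K =>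
          p.1 < p.2 ∧ a p.1 = 1 ∧ a p.2 = -1, flip2 K a p = b := by
      clear hij hset i j
      intro i j hij hset
      have hmem : ∀ k, b k ≠ a k ↔ k = i ∨ k = j := by
        intro k
        have := Finset.ext_iff.mp hset k
        simpa using this
      have hAlt : AltNeg K a b := by
        rw [Eplus, mem_filter] at hEp
        rcases hEp.2 with h | h
        · exact absurd ((congrFun h i).symm) ((hmem i).mpr (Or.inl rfl))
        · exact h
      have hdi : b i - a i = -2 := by
        have h := hAlt i (sub_ne_zero_of_ne ((hmem i).mpr (Or.inl rfl)))
        have hfil : (univ.filter fun t : Fin K => t < i ∧ b t - a t ≠ 0) = ∅ := by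
          ext t
          simp only [mem_filter, mem_univ, true_and, notMem_empty, iff_false, not_and]
          intro hlt hne
          rcases (hmem t).mp (sub_ne_zero.mp hne) with h' | h'
          · rw [h'] at hlt; exact absurd hlt (lt_irrefl _)
          · rw [h'] at hlt; exact absurd hlt (not_lt.mpr hij.le)
        rw [hfil] at h
        simpa using h
      have hdj : b j - a j = 2 := by
        have h := hAlt j (sub_ne_zero_of_ne ((hmem j).mpr (Or.inr rfl)))
        have hfil : (univ.filter fun t : Fin K => t < j ∧ b t - a t ≠ 0) = {i} := by
          ext t
          simp only [mem_filter, mem_univ, true_and, mem_singleton]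
          constructor
          · rintro ⟨hlt, hne⟩
            rcases (hmem t).mp (sub_ne_zero.mp hne) with h' | h'
            · exact h'
            · rw [h'] at hlt; exact absurd hlt (lt_irrefl _)
          · intro h''
            rw [h'']
            exact ⟨hij, sub_ne_zero_of_ne ((hmem i).mpr (Or.inl rfl))⟩
        rw [hfil] at h
        simpa using h
      have hai : a i = 1 := by rcases hav i with h | h <;> rcases hbv i with h' | h' <;> omega
      have haj : a j = -1 := by rcases hav j with h | h <;> rcases hbv j with h' | h' <;> omega
      refine ⟨(i, j), mem_filter.mpr ⟨mem_product.mpr ⟨mem_univ _, mem_univ _⟩, hij, hai, haj⟩, ?_⟩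
      funext k
      show (if k = i ∨ k = j then -(a k) else a k) = b k
      by_cases h : k = i ∨ k = j
      · rw [if_pos h]
        rcases h with rfl | rfl
        · omega
        · omega
      · rw [if_neg h]
        push_neg at h
        by_contra hne
        exact absurd ((hmem k).mp (Ne.symm hne)) (by simpa using h)
    rcases lt_or_gt_of_ne hij with h | h
    · exact key i j h hset
    · exact key j i h (by rw [hset, Finset.pair_comm])

lemma abar2_card {K : ℕ} {a : Fin K → ℤ} (ha : a ∈ V K) :
    abarK K 2 a =
      ((univ ×ˢ univ).filter fun p : Fin K × Fin K =>
        p.1 < p.2 ∧ a p.1 = -1 ∧ a p.2 = 1).card := by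
  classical
  have hav := memV_iff.mp ha
  have hane : ∀ k, a k ≠ 0 := fun k => by rcases hav k with h | h <;> simp [h]
  symm
  apply Finset.card_bij (fun p _ => flip2 K a p)
  · rintro ⟨i, j⟩ hp
    simp only [mem_filter, mem_product, mem_univ, true_and] at hp
    obtain ⟨hij, hai, haj⟩ := hp
    set b := flip2 K a (i, j) with hbdef
    have hbk : ∀ k, b k = if k = i ∨ k = j then -(a k) else a k := fun k => rfl
    have hdiff : ∀ k, b k - a k ≠ 0 ↔ (k = i ∨ k = j) := by
      intro k
      rw [hbk k]
      by_cases h : k = i ∨ k = j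
      · rw [if_pos h]
        have := hane k
        constructor
        · intro _; exact h
        · intro _ hc; omega
      · rw [if_neg h]; simp [h]
    have hbi : b i = 1 := by rw [hbk]; simp [hai]
    have hbj : b j = -1 := by rw [hbk]; simp [haj]
    have hVb : b ∈ V K := by
      rw [memV_iff]
      intro k
      rw [hbk k]
      split_ifs with h
      · rcases hav k with h' | h' <;> simp [h']
      · exact hav k
    have hcard2 : (univ.filter fun t : Fin K => b t ≠ a t).card = 2 := by
      have : (univ.filter fun t : Fin K => b t ≠ a t) = {i, j} := by
        ext t
        simp only [mem_filter, mem_univ, true_and, mem_insert, mem_singleton]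
        rw [← sub_ne_zero, hdiff]
      rw [this, Finset.card_insert_of_notMem (by simp [hij.ne]), Finset.card_singleton]
    have hEp : (a, b) ∈ Eminus K := by
      rw [Eminus, mem_filter]
      refine ⟨mem_product.mpr ⟨ha, hVb⟩, Or.inr ?_⟩
      intro k hk
      rcases (hdiff k).mp hk with h | h
      · rw [h]
        have hfil : (univ.filter fun t : Fin K => t < i ∧ b t - a t ≠ 0) = ∅ := by
          ext t
          simp only [mem_filter, mem_univ, true_and, notMem_empty, iff_false, not_and]
          intro hlt hne
          rcases (hdiff t).mp hne with h' | h'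
          · rw [h'] at hlt; exact absurd hlt (lt_irrefl _)
          · rw [h'] at hlt; exact absurd hlt (not_lt.mpr hij.le)
        rw [hfil]
        simp only [Finset.card_empty]
        rw [hbi, hai]; norm_num
      · rw [h]
        have hfil : (univ.filter fun t : Fin K => t < j ∧ b t - a t ≠ 0) = {i} := by
          ext t
          simp only [mem_filter, mem_univ, true_and, mem_singleton]
          constructor
          · rintro ⟨hlt, hne⟩
            rcases (hdiff t).mp hne with h' | h'
            · exact h'
            · rw [h'] at hlt; exact absurd hlt (lt_irrefl _)
          · intro h''
            rw [h'']
            exact ⟨hij, (hdiff i).mpr (Or.inl rfl)⟩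
        rw [hfil]
        simp only [Finset.card_singleton]
        rw [hbj, haj]; norm_num
    rw [mem_filter]
    exact ⟨hVb, hEp, hcard2⟩
  · rintro ⟨i, j⟩ hp ⟨i', j'⟩ hq heq
    simp only [mem_filter, mem_product, mem_univ, true_and] at hp hq
    obtain ⟨hij, hai, haj⟩ := hp
    obtain ⟨hij', hai', haj'⟩ := hq
    have h1 : i = i' := by
      have := congrFun heq i
      simp only [flip2] at this
      rw [if_pos (Or.inl trivial)] at this
      by_cases h : i = i' ∨ i = j'
      · rcases h with h | h
        · exact h
        · rw [h] at hai; rw [hai] at haj'; exact absurd haj' (by norm_num)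
      · rw [if_neg h] at this; rw [hai] at this; norm_num at this
    have h2 : j = j' := by
      have := congrFun heq j
      simp only [flip2] at this
      rw [if_pos (Or.inr trivial)] at this
      by_cases h : j = i' ∨ j = j'
      · rcases h with h | h
        · rw [h] at haj; rw [haj] at hai'; exact absurd hai' (by norm_num)
        · exact h
      · rw [if_neg h] at this; rw [haj] at this; norm_num at this
    simp [h1, h2]
  · intro b hb
    simp only [mem_filter] at hb
    obtain ⟨hbV, hEp, hcard⟩ := hb
    have hbv := memV_iff.mp hbV
    obtain ⟨i, j, hij, hset⟩ := Finset.card_eq_two.mp hcard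
    have key : ∀ i j : Fin K, i < j →
        (univ.filter fun k => b k ≠ a k) = ({i, j} : Finset (Fin K)) →
        ∃ p, ∃ hp : p ∈ (univ ×ˢ univ).filter fun p : Fin K × Fin K =>
          p.1 < p.2 ∧ a p.1 = -1 ∧ a p.2 = 1, flip2 K a p = b := by
      clear hij hset i j
      intro i j hij hset
      have hmem : ∀ k, b k ≠ a k ↔ k = i ∨ k = j := by
        intro k
        have := Finset.ext_iff.mp hset k
        simpa using this
      have hAlt : AltPos K a b := by
        rw [Eminus, mem_filter] at hEp
        rcases hEp.2 with h | h
        · exact absurd ((congrFun h i).symm) ((hmem i).mpr (Or.inl rfl))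
        · exact h
      have hdi : b i - a i = 2 := by
        have h := hAlt i (sub_ne_zero_of_ne ((hmem i).mpr (Or.inl rfl)))
        have hfil : (univ.filter fun t : Fin K => t < i ∧ b t - a t ≠ 0) = ∅ := by
          ext t
          simp only [mem_filter, mem_univ, true_and, notMem_empty, iff_false, not_and]
          intro hlt hne
          rcases (hmem t).mp (sub_ne_zero.mp hne) with h' | h'
          · rw [h'] at hlt; exact absurd hlt (lt_irrefl _)
          · rw [h'] at hlt; exact absurd hlt (not_lt.mpr hij.le)
        rw [hfil] at h
        simpa using h
      have hdj : b j - a j = -2 := by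
        have h := hAlt j (sub_ne_zero_of_ne ((hmem j).mpr (Or.inr rfl)))
        have hfil : (univ.filter fun t : Fin K => t < j ∧ b t - a t ≠ 0) = {i} := by
          ext t
          simp only [mem_filter, mem_univ, true_and, mem_singleton]
          constructor
          · rintro ⟨hlt, hne⟩
            rcases (hmem t).mp (sub_ne_zero.mp hne) with h' | h'
            · exact h'
            · rw [h'] at hlt; exact absurd hlt (lt_irrefl _)
          · intro h''
            rw [h'']
            exact ⟨hij, sub_ne_zero_of_ne ((hmem i).mpr (Or.inl rfl))⟩
        rw [hfil] at h
        simpa using h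
      have hai : a i = -1 := by rcases hav i with h | h <;> rcases hbv i with h' | h' <;> omega
      have haj : a j = 1 := by rcases hav j with h | h <;> rcases hbv j with h' | h' <;> omega
      refine ⟨(i, j), mem_filter.mpr ⟨mem_product.mpr ⟨mem_univ _, mem_univ _⟩, hij, hai, haj⟩, ?_⟩
      funext k
      show (if k = i ∨ k = j then -(a k) else a k) = b k
      by_cases h : k = i ∨ k = j
      · rw [if_pos h]
        rcases h with rfl | rfl
        · omega
        · omega
      · rw [if_neg h]
        push_neg at h
        by_contra hne
        exact absurd ((hmem k).mp (Ne.symm hne)) (by simpa using h)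
    rcases lt_or_gt_of_ne hij with h | h
    · exact key i j h hset
    · exact key j i h (by rw [hset, Finset.pair_comm])


lemma f2_eq {K : ℕ} {a : Fin K → ℤ} (ha : a ∈ V K) :
    2 * f2 K a = ∑ i : Fin K, a i * ((K : ℤ) - 1 - 2 * (i : ℕ)) := by
  classical
  have hav := memV_iff.mp ha
  rw [f2, alpha2_card ha, abar2_card ha]
  rw [Finset.card_filter, Finset.card_filter]
  push_cast
  rw [← Finset.sum_sub_distrib, Finset.mul_sum]
  have hpt : ∀ p : Fin K × Fin K,
      2 * ((if p.1 < p.2 ∧ a p.1 = 1 ∧ a p.2 = -1 then (1 : ℤ) else 0) -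
           (if p.1 < p.2 ∧ a p.1 = -1 ∧ a p.2 = 1 then (1 : ℤ) else 0)) =
      if p.1 < p.2 then a p.1 - a p.2 else 0 := by
    intro p
    rcases hav p.1 with h1 | h1 <;> rcases hav p.2 with h2 | h2 <;>
      by_cases hlt : p.1 < p.2 <;> simp [h1, h2, hlt]
  rw [Finset.sum_congr rfl fun p _ => hpt p]
  rw [Finset.sum_product]
  have hsplit : ∀ i : Fin K,
      (∑ j : Fin K, if i < j then a i - a j else 0) =
        a i * ((Finset.Ioi i).card : ℤ) - ∑ j ∈ Finset.Ioi i, a j := by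
    intro i
    rw [← Finset.sum_filter]
    have : Finset.univ.filter (fun j : Fin K => i < j) = Finset.Ioi i := by
      ext; simp
    rw [this, Finset.sum_sub_distrib, Finset.sum_const, nsmul_eq_mul, mul_comm]
  rw [Finset.sum_congr rfl fun i _ => hsplit i, Finset.sum_sub_distrib]
  have hswap : (∑ i : Fin K, ∑ j ∈ Finset.Ioi i, a j)
      = ∑ j : Fin K, a j * ((Finset.Iio j).card : ℤ) := by
    have h1 : ∀ i : Fin K, (∑ j ∈ Finset.Ioi i, a j)
        = ∑ j : Fin K, if i < j then a j else 0 := by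
      intro i
      rw [← Finset.sum_filter]
      congr 1
      ext; simp
    rw [Finset.sum_congr rfl fun i _ => h1 i, Finset.sum_comm]
    refine Finset.sum_congr rfl fun j _ => ?_
    rw [← Finset.sum_filter]
    have : Finset.univ.filter (fun i : Fin K => i < j) = Finset.Iio j := by
      ext; simp
    rw [this, Finset.sum_const, nsmul_eq_mul, mul_comm]
  rw [hswap, ← Finset.sum_sub_distrib]
  refine Finset.sum_congr rfl fun i _ => ?_
  rw [Fin.card_Ioi, Fin.card_Iio]
  have hi : (i : ℕ) < K := i.isLt
  have hcast : ((K - 1 - (i : ℕ) : ℕ) : ℤ) = (K : ℤ) - 1 - (i : ℕ) := by omega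
  rw [hcast]
  ring


lemma f1_cast {K : ℕ} (a : Fin K → ℤ) : (f1 K a : ℝ) = ∑ i : Fin K, (a i : ℝ) := by
  rw [f1]; push_cast; rfl

lemma f2_cast {K : ℕ} {a : Fin K → ℤ} (ha : a ∈ V K) :
    (f2 K a : ℝ) = (∑ i : Fin K, (a i : ℝ) * ((K : ℝ) - 1 - 2 * (i : ℕ))) / 2 := by
  have h := f2_eq ha
  have h2 := congrArg (fun z : ℤ => (z : ℝ)) h
  push_cast at h2
  linarith

lemma sum_coeff_zero {K : ℕ} (hK : 1 ≤ K) :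
    ∑ i : Fin K, ((K : ℝ) - 1 - 2 * (i : ℕ)) = 0 := by
  rw [Fin.sum_univ_eq_sum_range (fun i => (K : ℝ) - 1 - 2 * (i : ℕ)) K]
  have hg : ((∑ i ∈ Finset.range K, i : ℕ) : ℝ) * 2 = (K : ℝ) * ((K : ℝ) - 1) := by
    have := Finset.sum_range_id_mul_two K
    have h' : ((∑ i ∈ Finset.range K, i : ℕ) : ℝ) * 2 = ((K * (K - 1) : ℕ) : ℝ) := by
      exact_mod_cast congrArg (Nat.cast : ℕ → ℝ) this
    rw [h']
    push_cast [Nat.cast_sub hK]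
    ring
  have h1 : ∑ i ∈ Finset.range K, ((K : ℝ) - 1 - 2 * (i : ℕ))
      = K * ((K : ℝ) - 1) - 2 * ((∑ i ∈ Finset.range K, i : ℕ) : ℝ) := by
    rw [Finset.sum_sub_distrib, Finset.sum_const, Finset.card_range, ← Finset.mul_sum,
      nsmul_eq_mul]
    push_cast
    ring
  rw [h1]
  linarith [hg]

lemma mem_EK_V {K : ℕ} {e : Edge K} (he : e ∈ EK K) :
    e.2.1 ∈ V K ∧ e.2.2 ∈ V K := by
  rw [EK, Finset.mem_union] at he
  rcases he with h | h <;> obtain ⟨p, hp, hpe⟩ := Finset.mem_image.mp h <;> rw [← hpe]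
  · rw [Eplus, Finset.mem_filter, Finset.mem_product] at hp
    exact ⟨hp.1.1, hp.1.2⟩
  · rw [Eminus, Finset.mem_filter, Finset.mem_product] at hp
    exact ⟨hp.1.1, hp.1.2⟩

lemma sum_linear {K : ℕ} (x : Fin K → ℤ) :
    ∑ i : Fin K, (x i : ℝ) * (-(1 / 2) - ((K : ℝ) - 1 - 2 * (i : ℕ)) / (2 * ((K : ℝ) + 2)))
      = -(∑ i : Fin K, (x i : ℝ)) / 2
        - (∑ i : Fin K, (x i : ℝ) * ((K : ℝ) - 1 - 2 * (i : ℕ))) / (2 * ((K : ℝ) + 2)) := by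
  calc ∑ i : Fin K, (x i : ℝ) * (-(1 / 2) - ((K : ℝ) - 1 - 2 * (i : ℕ)) / (2 * ((K : ℝ) + 2)))
      = ∑ i : Fin K, (-((x i : ℝ)) / 2
          - ((x i : ℝ) * ((K : ℝ) - 1 - 2 * (i : ℕ))) / (2 * ((K : ℝ) + 2))) :=
        Finset.sum_congr rfl fun i _ => by ring
    _ = (∑ i : Fin K, -((x i : ℝ)) / 2)
          - ∑ i : Fin K, ((x i : ℝ) * ((K : ℝ) - 1 - 2 * (i : ℕ))) / (2 * ((K : ℝ) + 2)) :=
        Finset.sum_sub_distrib _ _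
    _ = _ := by
        rw [← Finset.sum_div, ← Finset.sum_div, ← Finset.sum_neg_distrib]

end CRW
/-- With `f = -((1/2)f₁ + (1/(K+2))f₂) + K/2`, one has
`f(a) = Σ_{i : a_i = -1} (3 + 2(K - i))/(K + 2)`, and `∇f` is stationary. -/
theorem statement16 (K : ℕ) (hK : 1 ≤ K) :
    let f : (Fin K → ℤ) → ℝ := fun a : Fin K → ℤ =>
      -((1 / 2) * (CRW.f1 K a : ℝ) + (1 / ((K : ℝ) + 2)) * (CRW.f2 K a : ℝ))
        + (K : ℝ) / 2
    (∀ a ∈ CRW.V K,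
      f a = ∑ i ∈ Finset.univ.filter (fun i : Fin K => a i = -1),
        (3 + 2 * ((K : ℝ) - ((i : ℕ) + 1))) / ((K : ℝ) + 2)) ∧
    (∀ e ∈ CRW.EK K, ∀ e' ∈ CRW.EK K, e.2.2 - e.2.1 = e'.2.2 - e'.2.1 →
      CRW.gradE K f e = CRW.gradE K f e') := by
  intro f
  have hKne : (K : ℝ) + 2 ≠ 0 := by positivity
  constructor
  · intro a ha
    have hav := CRW.memV_iff.mp ha
    have step1 : f a = ∑ i : Fin K,
        ((1 : ℝ) / 2 - (a i : ℝ) / 2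
          - (a i : ℝ) * ((K : ℝ) - 1 - 2 * (i : ℕ)) / (2 * ((K : ℝ) + 2))) := by
      show -((1 / 2) * (CRW.f1 K a : ℝ) + (1 / ((K : ℝ) + 2)) * (CRW.f2 K a : ℝ))
          + (K : ℝ) / 2 = _
      rw [CRW.f1_cast, CRW.f2_cast ha]
      rw [Finset.sum_sub_distrib, Finset.sum_sub_distrib, Finset.sum_const,
        Finset.card_univ, Fintype.card_fin, ← Finset.sum_div, ← Finset.sum_div,
        nsmul_eq_mul]
      field_simp
      ring
    rw [step1, Finset.sum_filter]
    have key : ∀ i : Fin K,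
        (1 : ℝ) / 2 - (a i : ℝ) / 2
            - (a i : ℝ) * ((K : ℝ) - 1 - 2 * (i : ℕ)) / (2 * ((K : ℝ) + 2))
          = (if a i = -1 then (3 + 2 * ((K : ℝ) - ((i : ℕ) + 1))) / ((K : ℝ) + 2) else 0)
            - ((K : ℝ) - 1 - 2 * (i : ℕ)) / (2 * ((K : ℝ) + 2)) := by
      intro i
      rcases hav i with h | h <;> rw [h]
      · rw [if_pos rfl]
        push_cast
        field_simp
        ring
      · rw [if_neg (by norm_num)]
        push_cast
        field_simp
        try ring
    rw [Finset.sum_congr rfl fun i _ => key i, Finset.sum_sub_distrib,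
      ← Finset.sum_div, CRW.sum_coeff_zero hK]
    simp
  · intro e he e' he' hd
    obtain ⟨ha, hb⟩ := CRW.mem_EK_V he
    obtain ⟨ha', hb'⟩ := CRW.mem_EK_V he'
    have grad : ∀ u v : Fin K → ℤ, u ∈ CRW.V K → v ∈ CRW.V K →
        f v - f u = ∑ i : Fin K, ((v i : ℝ) - (u i : ℝ)) *
          (-(1 / 2) - ((K : ℝ) - 1 - 2 * (i : ℕ)) / (2 * ((K : ℝ) + 2))) := by
      intro u v hu hv
      have hsplit : (∑ i : Fin K, ((v i : ℝ) - (u i : ℝ)) *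
            (-(1 / 2) - ((K : ℝ) - 1 - 2 * (i : ℕ)) / (2 * ((K : ℝ) + 2))))
          = (∑ i : Fin K, (v i : ℝ) *
              (-(1 / 2) - ((K : ℝ) - 1 - 2 * (i : ℕ)) / (2 * ((K : ℝ) + 2))))
            - ∑ i : Fin K, (u i : ℝ) *
              (-(1 / 2) - ((K : ℝ) - 1 - 2 * (i : ℕ)) / (2 * ((K : ℝ) + 2))) := by
        rw [← Finset.sum_sub_distrib]
        exact Finset.sum_congr rfl fun i _ => by ring
      rw [hsplit, CRW.sum_linear, CRW.sum_linear]
      show (-((1 / 2) * (CRW.f1 K v : ℝ) + (1 / ((K : ℝ) + 2)) * (CRW.f2 K v : ℝ))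
            + (K : ℝ) / 2)
          - (-((1 / 2) * (CRW.f1 K u : ℝ) + (1 / ((K : ℝ) + 2)) * (CRW.f2 K u : ℝ))
            + (K : ℝ) / 2) = _
      rw [CRW.f1_cast, CRW.f1_cast, CRW.f2_cast hu, CRW.f2_cast hv]
      field_simp
      ring
    show f e.2.2 - f e.2.1 = f e'.2.2 - f e'.2.1
    rw [grad _ _ ha hb, grad _ _ ha' hb']
    refine Finset.sum_congr rfl fun i _ => ?_
    have h2 : e.2.2 i - e.2.1 i = e'.2.2 i - e'.2.1 i := by
      have := congrFun hd i
      simpa using this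
    have h3 : (e.2.2 i : ℝ) - (e.2.1 i : ℝ) = (e'.2.2 i : ℝ) - (e'.2.1 i : ℝ) := by
      exact_mod_cast h2
    rw [h3]
end
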